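/- arXiv:1302.5267 — 5 statements merged into one kernel-verified Lean document; each statement's English description precedes it below -/
import Mathlib

section
/- Let q be prime and s ∈ ℕ. Fix m ∈ ℕ and polynomials k_1, ..., k_s ∈ F_q[x], not all zero. The set M_m(k_1,...,k_s) of s-tuples (f_1,...,f_s) of formal Laurent series in F_q((x^{-1})) with zero polynomial part such that ν({k_1 f_1 + ⋯ + k_s f_s}) ≤ −m has Haar measure μ_s(M_m) = q^{−(m−1)}. -/
open MeasureTheory Finset

/-- The `(n+1)`-st digit `ξ_{n+1} ∈ Z_q` of the `q`-adic expansion of a real number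
`x ∈ [0,1)`; via `x ↔ ∑_k ξ_k x^{-k}` this identifies `x` with an element of the
set `Z̄ ⊆ F_q((x^{-1}))` of Laurent series with zero polynomial part, in such a way
that the normalized Haar measure on `Z̄` corresponds to Lebesgue measure on `[0,1)`. -/
noncomputable def qDigit (q : ℕ) (x : ℝ) (n : ℕ) : ZMod q :=
  ((⌊x * (q : ℝ) ^ (n + 1)⌋ : ℤ) : ZMod q)

/-- The coefficient of `x^{-(m+1)}` of the product `k(x)·f(x)` in `F_q((x^{-1}))`,
where the Laurent series `f = ∑_{j≥0} f_j x^{-(j+1)}` is given by its coefficient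
sequence.  In particular `ν({k·f}) ≤ -M` iff `fracCoeff q k f n = 0` for all `n`
with `n + 2 ≤ M`. -/
def fracCoeff (q : ℕ) (k : Polynomial (ZMod q)) (f : ℕ → ZMod q) (m : ℕ) : ZMod q :=
  ∑ j ∈ Finset.range (k.natDegree + 1), k.coeff j * f (m + j)

/-- The (monic) gcd of the tuple `k` is `1`: every common divisor is a unit. -/
def GcdOne {q s : ℕ} (k : Fin s → Polynomial (ZMod q)) : Prop :=
  ∀ d : Polynomial (ZMod q), (∀ i, d ∣ k i) → IsUnit d

/-!
Only the first `N + 1` digits of each `f i` enter the conditions once `N ≥ m - 2 + deg k i`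
for all `i`, so the set is a disjoint union of grid cubes of side `q^{-(N+1)}`, one for each
tuple of digit windows `(F_q^{N+1})^s` in the kernel of an `F_q`-linear map to `F_q^{m-1}`.
That map is surjective: on the digits `D, …, D + m - 2` of a coordinate `i₀` with `k i₀ ≠ 0`
of degree `D` it is triangular, with the leading coefficient of `k i₀` on the diagonal.
Hence the kernel has `q^{(N+1)s - (m-1)}` elements, each cube has measure `q^{-(N+1)s}`.
-/

open scoped ENNReal Polynomial

lemma qDigit_eq_natCast_floor_div {q : ℕ} (hq : q ≠ 0) {x : ℝ} (hx : 0 ≤ x) {n N : ℕ}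
    (hn : n ≤ N) :
    qDigit q x n = ((⌊x * (q : ℝ) ^ (N + 1)⌋₊ / q ^ (N - n) : ℕ) : ZMod q) := by
  have hpow : x * (q : ℝ) ^ (n + 1) = x * (q : ℝ) ^ (N + 1) / ((q ^ (N - n) : ℕ) : ℝ) := by
    have : (q : ℝ) ≠ 0 := by exact_mod_cast hq
    rw [show N + 1 = (n + 1) + (N - n) by omega, pow_add _ (n + 1), Nat.cast_pow, ← mul_assoc,
      mul_div_cancel_right₀ _ (by positivity)]
  rw [← Nat.floor_div_natCast, ← hpow, qDigit, ← Int.natCast_floor_eq_floor (by positivity),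
    Int.cast_natCast]

/-- The first `N + 1` digits of `a / q ^ (N + 1)`, in the indexing of `qDigit`. -/
def digitWindow (q N a : ℕ) : Fin (N + 1) → ZMod q :=
  fun r => ((a / q ^ (N - r) : ℕ) : ZMod q)

def digitsEquiv (q N : ℕ) [NeZero q] : Fin (q ^ (N + 1)) ≃ (Fin (N + 1) → ZMod q) :=
  finFunctionFinEquiv.symm.trans (Equiv.arrowCongr Fin.revPerm (ZMod.finEquiv q).toEquiv)

lemma digitsEquiv_apply (q N : ℕ) [NeZero q] (a : Fin (q ^ (N + 1))) :
    digitsEquiv q N a = digitWindow q N a := by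
  ext r
  obtain ⟨q, rfl⟩ := Nat.exists_eq_succ_of_ne_zero (NeZero.ne q)
  apply Fin.ext
  change ((finFunctionFinEquiv.symm a r.rev : Fin (q + 1)) : ℕ) =
    ZMod.val ((a / (q + 1) ^ (N - r) : ℕ) : ZMod (q + 1))
  rw [finFunctionFinEquiv_symm_apply_val, ZMod.val_natCast, Fin.val_rev]
  congr 3
  omega

lemma setOf_mem_Ico_floor_mul_eq {Q a : ℕ} (ha : a < Q) :
    {x : ℝ | x ∈ Set.Ico 0 1 ∧ ⌊x * Q⌋₊ = a} = Set.Ico (a / Q : ℝ) ((a + 1) / Q) := by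
  have hQ : (0 : ℝ) < Q := by exact_mod_cast (Nat.zero_le a).trans_lt ha
  have haQ : (a : ℝ) + 1 ≤ Q := by exact_mod_cast ha
  ext x
  simp only [Set.mem_ofPred_eq, Set.mem_Ico, div_le_iff₀ hQ, lt_div_iff₀ hQ]
  constructor
  · rintro ⟨⟨hx0, -⟩, hx⟩
    exact (Nat.floor_eq_iff (by positivity)).mp hx
  · rintro ⟨hax, hxa⟩
    have hx0 : 0 ≤ x := nonneg_of_mul_nonneg_left ((Nat.cast_nonneg a).trans hax) hQ
    refine ⟨⟨hx0, ?_⟩, (Nat.floor_eq_iff (by positivity)).mpr ⟨hax, hxa⟩⟩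
    nlinarith

lemma setOf_unitCube_floor_mul_eq {s Q : ℕ} (a : Fin s → Fin Q) :
    {f : Fin s → ℝ | ∀ i, f i ∈ Set.Ico 0 1 ∧ ⌊f i * Q⌋₊ = a i} =
      Set.univ.pi fun i => Set.Ico ((a i : ℕ) / Q : ℝ) (((a i : ℕ) + 1) / Q) := by
  ext f
  simp only [Set.mem_ofPred_eq, Set.mem_univ_pi]
  refine forall_congr' fun i => ?_
  rw [← setOf_mem_Ico_floor_mul_eq (a i).isLt]
  rfl

lemma volume_unitCube_floor_mul_eq {s Q : ℕ} (a : Fin s → Fin Q) :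
    volume {f : Fin s → ℝ | ∀ i, f i ∈ Set.Ico 0 1 ∧ ⌊f i * Q⌋₊ = a i} = (Q : ℝ≥0∞)⁻¹ ^ s := by
  rw [setOf_unitCube_floor_mul_eq, volume_pi_pi]
  have hlen (i) : volume (Set.Ico ((a i : ℕ) / Q : ℝ) (((a i : ℕ) + 1) / Q)) = (Q : ℝ≥0∞)⁻¹ := by
    have hQ : (0 : ℝ) < Q := by exact_mod_cast (a i).pos
    rw [Real.volume_Ico, add_div, add_sub_cancel_left, one_div, ENNReal.ofReal_inv_of_pos hQ,
      ENNReal.ofReal_natCast]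
  simp only [hlen, prod_const, card_univ, Fintype.card_fin]

lemma volume_unitCube_inter_floor_mul {s Q : ℕ} (hQ : 0 < Q) (P : (Fin s → ℕ) → Prop)
    [DecidablePred P] :
    volume {f : Fin s → ℝ | (∀ i, f i ∈ Set.Ico 0 1) ∧ P fun i => ⌊f i * Q⌋₊} =
      #{a : Fin s → Fin Q | P fun i => a i} * (Q : ℝ≥0∞)⁻¹ ^ s := by
  have hunion : {f : Fin s → ℝ | (∀ i, f i ∈ Set.Ico 0 1) ∧ P fun i => ⌊f i * Q⌋₊} =
      ⋃ a ∈ ({a : Fin s → Fin Q | P fun i => a i} : Finset _),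
        {f : Fin s → ℝ | ∀ i, f i ∈ Set.Ico 0 1 ∧ ⌊f i * Q⌋₊ = a i} := by
    ext f
    simp only [Set.mem_ofPred_eq, Set.mem_iUnion, mem_filter, mem_univ, true_and, exists_prop]
    constructor
    · rintro ⟨hf, hP⟩
      have hlt (i) : ⌊f i * Q⌋₊ < Q := by
        rw [Nat.floor_lt (mul_nonneg (hf i).1 (Nat.cast_nonneg Q))]
        nlinarith [(hf i).2, (Nat.cast_pos.mpr hQ : (0 : ℝ) < Q)]
      exact ⟨fun i => ⟨⌊f i * Q⌋₊, hlt i⟩, hP, fun i => ⟨hf i, rfl⟩⟩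
    · rintro ⟨a, hP, hf⟩
      refine ⟨fun i => (hf i).1, ?_⟩
      simpa only [fun i => (hf i).2] using hP
  rw [hunion, measure_biUnion_finset]
  · rw [sum_congr rfl fun a _ => volume_unitCube_floor_mul_eq a, sum_const, nsmul_eq_mul]
  · intro a _ b _ hab
    refine Set.disjoint_left.mpr fun f hfa hfb => hab (funext fun i => Fin.ext ?_)
    rw [← (hfa i).2, ← (hfb i).2]
  · intro a _
    rw [setOf_unitCube_floor_mul_eq]
    exact MeasurableSet.univ_pi fun i => measurableSet_Ico

lemma AddMonoidHom.card_ker_mul_card_of_surjective {G H : Type*} [AddGroup G] [AddGroup H]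
    (f : G →+ H) (hf : Function.Surjective f) : Nat.card f.ker * Nat.card H = Nat.card G := by
  rw [← AddSubgroup.card_mul_index f.ker, AddSubgroup.index_ker, AddMonoidHom.range_eq_top.mpr hf,
    AddSubgroup.card_top]

variable {q : ℕ}

lemma fracCoeff_congr (k : (ZMod q)[X]) {f g : ℕ → ZMod q} {n : ℕ}
    (h : ∀ r, n ≤ r → r ≤ n + k.natDegree → f r = g r) :
    fracCoeff q k f n = fracCoeff q k g n :=
  sum_congr rfl fun j hj => by rw [h (n + j) (by omega) (by have := mem_range.mp hj; omega)]

def fracCoeffLinearMap (k : (ZMod q)[X]) (n : ℕ) : (ℕ → ZMod q) →ₗ[ZMod q] ZMod q where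
  toFun f := fracCoeff q k f n
  map_add' f g := by simp [fracCoeff, mul_add, sum_add_distrib]
  map_smul' c f := by simp [fracCoeff, mul_sum, mul_left_comm]

lemma eq_zero_of_forall_fracCoeff_eq_zero [NoZeroDivisors (ZMod q)] {k : (ZMod q)[X]} (hk : k ≠ 0)
    {f : ℕ → ZMod q} {M : ℕ} (hf : ∀ r < k.natDegree, f r = 0)
    (h : ∀ n < M, fracCoeff q k f n = 0) : ∀ n < M, f (n + k.natDegree) = 0 := by
  intro n
  induction n using Nat.strong_induction_on with
  | _ n ih =>
  intro hn
  have hlower : ∀ j < k.natDegree, f (n + j) = 0 := by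
    intro j hj
    by_cases hr : n + j < k.natDegree
    · exact hf _ hr
    · simpa [Nat.sub_add_cancel (not_lt.mp hr)] using
        ih (n + j - k.natDegree) (by omega) (by omega)
  have hn0 := h n hn
  rw [fracCoeff, sum_range_succ, sum_eq_zero fun j hj => by rw [hlower j (mem_range.mp hj),
    mul_zero], zero_add, Polynomial.coeff_natDegree] at hn0
  exact (mul_eq_zero.mp hn0).resolve_left (Polynomial.leadingCoeff_ne_zero.mpr hk)

variable {s : ℕ}

/-- The conditions of the theorem for `m = M + 1`, as a linear map on the windows of the first
`N + 1` digits of the coordinates. -/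
noncomputable def windowMap (k : Fin s → (ZMod q)[X]) (N M : ℕ) :
    (Fin s → Fin (N + 1) → ZMod q) →ₗ[ZMod q] Fin M → ZMod q :=
  LinearMap.pi fun n => ∑ i, fracCoeffLinearMap (k i) n ∘ₗ
    Function.ExtendByZero.linearMap (ZMod q) Fin.val ∘ₗ LinearMap.proj i

lemma windowMap_apply (k : Fin s → (ZMod q)[X]) {N M : ℕ} (v : Fin s → Fin (N + 1) → ZMod q)
    (n : Fin M) :
    windowMap k N M v n = ∑ i, fracCoeff q (k i) (Function.extend Fin.val (v i) 0) n := by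
  simp only [windowMap, fracCoeffLinearMap, LinearMap.pi_apply, LinearMap.coe_sum,
    LinearMap.coe_comp, LinearMap.coe_mk, LinearMap.coe_proj, Finset.sum_apply, Function.comp_apply,
    Function.eval]
  rfl

lemma windowMap_single (k : Fin s → (ZMod q)[X]) {N M : ℕ} (i₀ : Fin s)
    (u : Fin (N + 1) → ZMod q) (n : Fin M) :
    windowMap k N M (Pi.single i₀ u) n = fracCoeff q (k i₀) (Function.extend Fin.val u 0) n := by
  rw [windowMap_apply, sum_eq_single i₀]
  · rw [Pi.single_eq_same]
  · intro i _ hi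
    simp [Pi.single_eq_of_ne hi, Function.extend_zero, fracCoeff]
  · exact fun h => absurd (mem_univ i₀) h

lemma windowMap_surjective [Fact q.Prime] {k : Fin s → (ZMod q)[X]} {N M : ℕ} {i₀ : Fin s}
    (hk : k i₀ ≠ 0) (hN : M + (k i₀).natDegree ≤ N + 1) :
    Function.Surjective (windowMap k N M) := by
  set D := (k i₀).natDegree
  let shift : Fin M → Fin (N + 1) := fun t => ⟨t + D, by omega⟩
  have hshift : Function.Injective shift := fun t t' h => by
    simpa [shift, Fin.ext_iff] using h
  let ψ := LinearMap.single (ZMod q) (fun _ => Fin (N + 1) → ZMod q) i₀ ∘ₗ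
    Function.ExtendByZero.linearMap (ZMod q) shift
  suffices Function.Injective (windowMap k N M ∘ₗ ψ) from
    .of_comp (LinearMap.injective_iff_surjective.mp this)
  refine (injective_iff_map_eq_zero _).mpr fun w hw => ?_
  set f : ℕ → ZMod q := Function.extend Fin.val (Function.extend shift w 0) 0
  have hf_lt (r) (hr : r < D) : f r = 0 := by
    refine (Fin.val_injective.extend_apply _ 0 (⟨r, by omega⟩ : Fin (N + 1))).trans
      (Function.extend_apply' _ _ _ fun ⟨t, ht⟩ => ?_)
    simp [shift, Fin.ext_iff] at ht
    omega
  have hf_add (n) (hn : n < M) : f (n + D) = w ⟨n, hn⟩ :=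
    (Fin.val_injective.extend_apply _ 0 (shift ⟨n, hn⟩)).trans (hshift.extend_apply w 0 _)
  have hfrac (n) (hn : n < M) : fracCoeff q (k i₀) f n = 0 := by
    have h := congrFun hw ⟨n, hn⟩
    simp only [ψ, LinearMap.comp_apply, LinearMap.coe_single, windowMap_single] at h
    exact h
  funext t
  rw [← hf_add t t.isLt]
  exact eq_zero_of_forall_fracCoeff_eq_zero hk hf_lt hfrac t t.isLt

lemma card_ker_windowMap_mul [Fact q.Prime] {k : Fin s → (ZMod q)[X]} {N M : ℕ} {i₀ : Fin s}
    (hk : k i₀ ≠ 0) (hN : M + (k i₀).natDegree ≤ N + 1) :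
    Nat.card (LinearMap.ker (windowMap k N M)) * q ^ M = q ^ ((N + 1) * s) := by
  have := (windowMap k N M).toAddMonoidHom.card_ker_mul_card_of_surjective
    (windowMap_surjective hk hN)
  simpa [Nat.card_eq_fintype_card, ZMod.card, ← pow_mul, mul_comm] using this

lemma card_filter_windowMap_digitWindow [NeZero q] (k : Fin s → (ZMod q)[X]) (N M : ℕ) :
    #{a : Fin s → Fin (q ^ (N + 1)) | windowMap k N M (fun i => digitWindow q N (a i)) = 0} =
      Nat.card (LinearMap.ker (windowMap k N M)) := by
  rw [← Fintype.card_subtype, ← Nat.card_eq_fintype_card]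
  exact Nat.card_congr ((Equiv.piCongrRight fun _ => digitsEquiv q N).subtypeEquiv fun a => by
    rw [show (Equiv.piCongrRight fun _ => digitsEquiv q N) a = fun i => digitWindow q N (a i) from
      funext fun i => digitsEquiv_apply q N (a i), LinearMap.mem_ker])

lemma windowMap_digitWindow_floor_apply [NeZero q] {k : Fin s → (ZMod q)[X]} {N M : ℕ}
    (hN : ∀ i, M + (k i).natDegree ≤ N + 1) {x : Fin s → ℝ} (hx : ∀ i, 0 ≤ x i) (n : Fin M) :
    windowMap k N M (fun i => digitWindow q N ⌊x i * ((q ^ (N + 1) : ℕ) : ℝ)⌋₊) n =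
      ∑ i, fracCoeff q (k i) (qDigit q (x i)) n := by
  rw [windowMap_apply]
  refine sum_congr rfl fun i _ => fracCoeff_congr _ fun r _ hr => ?_
  have hrN : r < N + 1 := by have := hN i; omega
  rw [Fin.val_injective.extend_apply _ 0 (⟨r, hrN⟩ : Fin (N + 1)), digitWindow, Nat.cast_pow,
    qDigit_eq_natCast_floor_div (NeZero.ne q) (hx i) (Nat.lt_succ_iff.mp hrN)]

theorem measure_M_m_general (q : ℕ) (hq : q.Prime) (s : ℕ) (m : ℕ)
    (k : Fin s → Polynomial (ZMod q)) (hk : ¬ ∀ i, k i = 0) :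
    volume {f : Fin s → ℝ | (∀ i, f i ∈ Set.Ico (0:ℝ) 1) ∧
        ∀ n : ℕ, n + 2 ≤ m → ∑ i, fracCoeff q (k i) (qDigit q (f i)) n = 0} =
      ((q : ENNReal) ^ (m - 1))⁻¹ := by
  have := Fact.mk hq
  classical
  obtain ⟨i₀, hi₀⟩ := not_forall.mp hk
  set N := m + univ.sup fun i => (k i).natDegree
  have hN (i) : m - 1 + (k i).natDegree ≤ N + 1 := by
    have := le_sup (f := fun i => (k i).natDegree) (mem_univ i)
    omega
  set K := Nat.card (LinearMap.ker (windowMap k N (m - 1)))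
  have hK : K * q ^ (m - 1) = q ^ ((N + 1) * s) := card_ker_windowMap_mul hi₀ (hN i₀)
  have hK0 : (K : ℝ≥0∞) ≠ 0 := by
    rintro h
    rw [Nat.cast_eq_zero.mp h, zero_mul] at hK
    exact pow_ne_zero _ hq.ne_zero hK.symm
  calc _ = volume {f : Fin s → ℝ | (∀ i, f i ∈ Set.Ico 0 1) ∧ windowMap k N (m - 1)
          (fun i => digitWindow q N ⌊f i * ((q ^ (N + 1) : ℕ) : ℝ)⌋₊) = 0} := by
        congr 1
        ext f
        refine and_congr_right fun hf => ?_
        simp only [funext_iff, windowMap_digitWindow_floor_apply hN fun i => (hf i).1,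
          Pi.zero_apply, Fin.forall_iff]
        exact forall_congr' fun n => ⟨fun h hn => h (by omega), fun h hn => h (by omega)⟩
    _ = K * ((q : ℝ≥0∞) ^ ((N + 1) * s))⁻¹ := by
        rw [volume_unitCube_inter_floor_mul (pow_pos hq.pos _)
            (fun a => windowMap k N (m - 1) (fun i => digitWindow q N (a i)) = 0),
          card_filter_windowMap_digitWindow, ← ENNReal.inv_pow, Nat.cast_pow, ← pow_mul]
    _ = ((q : ℝ≥0∞) ^ (m - 1))⁻¹ := by
        rw [← Nat.cast_pow, ← hK, Nat.cast_mul, Nat.cast_pow,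
          ENNReal.mul_inv (.inl hK0) (.inl (ENNReal.natCast_ne_top _)),
          ENNReal.mul_inv_cancel_left hK0 (ENNReal.natCast_ne_top _)]

/-- For `m ≥ 1` and polynomials `k_1, …, k_s`, not all zero, the set
`M_m(k_1,…,k_s)` of tuples `(f_1,…,f_s) ∈ Z̄^s` with
`ν({k_1 f_1 + ⋯ + k_s f_s}) ≤ -m` has Haar measure `q^{-(m-1)}`. -/
theorem measure_M_m (q : ℕ) (hq : q.Prime) (s : ℕ) (hs : 1 ≤ s) (m : ℕ) (hm : 1 ≤ m)
    (k : Fin s → Polynomial (ZMod q)) (hk : ¬ ∀ i, k i = 0) :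
    volume {f : Fin s → ℝ | (∀ i, f i ∈ Set.Ico (0:ℝ) 1) ∧
        ∀ n : ℕ, n + 2 ≤ m → ∑ i, fracCoeff q (k i) (qDigit q (f i)) n = 0} =
      ((q : ENNReal) ^ (m - 1))⁻¹ :=
  measure_M_m_general q hq s m k hk
end

section
/- Let q be prime and s ∈ ℕ. The set of (f_1,...,f_s) ∈ Z̄^s for which there exist infinitely many s-tuples (k_1,...,k_s) of nonzero polynomials with gcd 1 satisfying both ν({k_1 f_1 + ⋯ + k_s f_s}) ≤ −(r_1+⋯+r_s) and ν({(k_1+β_1(k_1)) f_1 + ⋯ + (k_s+β_s(k_s)) f_s}) ≤ −⌊(r_1+⋯+r_s)/2⌋ (where r_j = deg(k_j) and β_j(k_j) are given polynomials, not all zero, each zero or coprime to k_j) has μ_s-measure zero. -/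
/-
For a fixed tuple `k` of total degree `m`, the two conditions are `m - 1` and `⌊m/2⌋ - 1` linear
equations over `F_q` in the first `N` digits of `f_1, …, f_s`. They are linearly independent: a
dependency is a pair of polynomials `a, b` with `a k_i + b (k_i + β_i) = 0` for all `i`, and
`gcd(k) = 1` together with `β_i` being zero or coprime to `k_i` forces `a = b = 0`. Hence the set
of `f` satisfying both conditions for `k` has measure at most `q^{-(m + ⌊m/2⌋ - 2)}`. These bounds
are summable over all tuples `k`, and the convergence Borel–Cantelli lemma concludes.
-/

open MeasureTheory Finset

open scoped ENNReal Polynomial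
open Polynomial Matrix

theorem floor_mul_pow_eq_of_qDigit_eq {q : ℕ} (hq : 0 < q) {x y : ℝ} (h0 : ⌊x⌋ = ⌊y⌋) :
    ∀ {N : ℕ}, (∀ n < N, qDigit q x n = qDigit q y n) → ⌊x * q ^ N⌋ = ⌊y * q ^ N⌋
  | 0, _ => by simpa using h0
  | N + 1, h => by
    have split (z : ℝ) : ⌊z * q ^ (N + 1)⌋ = q * ⌊z * q ^ N⌋ + ⌊z * q ^ (N + 1)⌋ % q := by
      have hz : ⌊z * q ^ N⌋ = ⌊z * q ^ (N + 1)⌋ / q := by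
        rw [← Int.floor_div_natCast, pow_succ, ← mul_assoc, mul_div_cancel_right₀]
        exact_mod_cast hq.ne'
      rw [hz, Int.mul_ediv_add_emod]
    have hdigit : ⌊x * q ^ (N + 1)⌋ % q = ⌊y * q ^ (N + 1)⌋ % q :=
      (ZMod.intCast_eq_intCast_iff' _ _ q).mp (h N N.lt_succ_self)
    rw [split x, split y, hdigit,
      floor_mul_pow_eq_of_qDigit_eq hq h0 fun n hn => h n (hn.trans N.lt_succ_self)]

theorem volume_qDigit_cylinder_le {q : ℕ} (hq : 0 < q) (N : ℕ) (w : Fin N → ZMod q) :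
    volume {x : ℝ | x ∈ Set.Ico 0 1 ∧ ∀ n : Fin N, qDigit q x n = w n} ≤ (q : ℝ≥0∞)⁻¹ ^ N := by
  rcases Set.eq_empty_or_nonempty {x : ℝ | x ∈ Set.Ico 0 1 ∧ ∀ n : Fin N, qDigit q x n = w n}
    with hempty | ⟨x₀, hx₀, hw₀⟩
  · simp only [hempty, measure_empty, zero_le]
  have hqN : (0 : ℝ) < (q : ℝ) ^ N := by positivity
  set a : ℤ := ⌊x₀ * q ^ N⌋
  have hsub : {x : ℝ | x ∈ Set.Ico 0 1 ∧ ∀ n : Fin N, qDigit q x n = w n} ⊆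
      Set.Ico (a / (q : ℝ) ^ N) ((a + 1) / (q : ℝ) ^ N) := by
    rintro x ⟨hx, hw⟩
    have hfloor : ⌊x * q ^ N⌋ = a := by
      refine floor_mul_pow_eq_of_qDigit_eq hq ?_ fun n hn => ?_
      · rw [Int.floor_eq_zero_iff.mpr hx, Int.floor_eq_zero_iff.mpr hx₀]
      · rw [hw ⟨n, hn⟩, hw₀ ⟨n, hn⟩]
    obtain ⟨hlo, hhi⟩ := Int.floor_eq_iff.mp hfloor
    exact ⟨(div_le_iff₀ hqN).mpr hlo, (lt_div_iff₀ hqN).mpr hhi⟩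
  calc _ ≤ volume (Set.Ico (a / (q : ℝ) ^ N) ((a + 1) / (q : ℝ) ^ N)) := measure_mono hsub
    _ = (q : ℝ≥0∞)⁻¹ ^ N := by
      rw [Real.volume_Ico, ← sub_div, add_sub_cancel_left, one_div, ENNReal.ofReal_inv_of_pos hqN,
        ENNReal.ofReal_pow (Nat.cast_nonneg q), ENNReal.ofReal_natCast, ENNReal.inv_pow]

theorem volume_qDigits_mem_le {q : ℕ} [NeZero q] {ι : Type*} [Fintype ι] (N : ℕ)
    (S : Set (ι × Fin N → ZMod q)) :
    volume {f : ι → ℝ | (∀ i, f i ∈ Set.Ico 0 1) ∧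
        (fun p : ι × Fin N => qDigit q (f p.1) p.2) ∈ S} ≤
      Nat.card S * (q : ℝ≥0∞)⁻¹ ^ Fintype.card (ι × Fin N) := by
  set T := (Set.toFinite S).toFinset
  have hsub : {f : ι → ℝ | (∀ i, f i ∈ Set.Ico 0 1) ∧
        (fun p : ι × Fin N => qDigit q (f p.1) p.2) ∈ S} ⊆
      ⋃ w ∈ T, Set.univ.pi fun i => {x | x ∈ Set.Ico 0 1 ∧ ∀ n : Fin N, qDigit q x n = w (i, n)} :=
    fun f ⟨hf, hS⟩ => Set.mem_biUnion (by simpa [T] using hS) fun i _ => ⟨hf i, fun _ => rfl⟩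
  calc _ ≤ ∑ w ∈ T, volume (Set.univ.pi fun i =>
          {x | x ∈ Set.Ico 0 1 ∧ ∀ n : Fin N, qDigit q x n = w (i, n)}) :=
        (measure_mono hsub).trans (measure_biUnion_finset_le _ _)
    _ ≤ ∑ _w ∈ T, (q : ℝ≥0∞)⁻¹ ^ Fintype.card (ι × Fin N) := by
        gcongr with w
        rw [volume_pi_pi, Fintype.card_prod, Fintype.card_fin, pow_mul', ← Finset.card_univ,
          ← Finset.prod_const]
        exact Finset.prod_le_prod' fun i _ => volume_qDigit_cylinder_le (NeZero.pos q) N _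
    _ = _ := by
        rw [Finset.sum_const, nsmul_eq_mul, Nat.card_coe_set_eq, Set.ncard_eq_toFinset_card S]

theorem dvd_of_forall_dvd_mul {R ι : Type*} [CommRing R] [IsPrincipalIdealRing R] [Fintype ι]
    {k : ι → R} (hk : ∀ d, (∀ i, d ∣ k i) → IsUnit d) {b c : R} (h : ∀ i, b ∣ c * k i) :
    b ∣ c := by
  have hspan : Ideal.span (Set.range k) = ⊤ := by
    obtain ⟨g, hg⟩ := (IsPrincipalIdealRing.principal (Ideal.span (Set.range k))).principal
    rw [hg, Ideal.submodule_span_eq, Ideal.span_singleton_eq_top]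
    refine hk g fun i => Ideal.mem_span_singleton.mp ?_
    rw [← Ideal.submodule_span_eq, ← hg]
    exact Ideal.subset_span ⟨i, rfl⟩
  obtain ⟨x, hx⟩ := Ideal.mem_span_range_iff_exists_fun.mp (hspan ▸ Submodule.mem_top : (1 : R) ∈ _)
  calc b ∣ ∑ i, x i * (c * k i) := Finset.dvd_sum fun i _ => dvd_mul_of_dvd_right (h i) _
    _ = c := by simp_rw [mul_left_comm (x _), ← Finset.mul_sum, hx, mul_one]

theorem eq_zero_of_forall_mul_add_mul_add_eq_zero {R ι : Type*} [CommRing R] [IsDomain R]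
    [IsPrincipalIdealRing R] [Fintype ι] {k b : ι → R} (hk : ∀ d, (∀ i, d ∣ k i) → IsUnit d)
    (hb : ∀ i, b i = 0 ∨ IsCoprime (b i) (k i)) (hb0 : ¬∀ i, b i = 0) {i₀ : ι} (hi₀ : k i₀ ≠ 0)
    (hi₀' : ¬IsUnit (k i₀)) {u v : R} (h : ∀ i, u * k i + v * (k i + b i) = 0) :
    u = 0 ∧ v = 0 := by
  obtain ⟨e, he⟩ : v ∣ u + v :=
    dvd_of_forall_dvd_mul hk fun i => ⟨-b i, by linear_combination h i⟩
  by_cases hv : v = 0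
  · subst hv
    exact ⟨by simpa using he, rfl⟩
  exfalso
  have hbe : ∀ i, b i = -(e * k i) := fun i =>
    mul_left_cancel₀ hv (by linear_combination h i - k i * he)
  rcases hb i₀ with h0 | hcop
  · have he0 : e = 0 := by
      rw [hbe, neg_eq_zero, mul_eq_zero] at h0
      exact h0.resolve_right hi₀
    exact hb0 fun i => by rw [hbe i, he0, zero_mul, neg_zero]
  · exact hi₀' (hcop.isUnit_of_dvd' ⟨-e, by rw [hbe]; ring⟩ dvd_rfl)

noncomputable def shiftMatrix {F ι : Type*} [Semiring F] (k : ι → F[X]) (R N : ℕ) :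
    Matrix (Fin R) (ι × Fin N) F :=
  Matrix.of fun n p => (X ^ (n : ℕ) * k p.1).coeff p.2

theorem fracCoeff_eq_sum_coeff {q : ℕ} (k : (ZMod q)[X]) (f : ℕ → ZMod q) {n N : ℕ}
    (hN : n + k.natDegree < N) :
    fracCoeff q k f n = ∑ t : Fin N, (X ^ n * k).coeff t * f t := by
  obtain ⟨r, rfl⟩ : ∃ r, N = n + r := ⟨N - n, by omega⟩
  simp only [Fin.sum_univ_eq_sum_range (fun t => (X ^ n * k).coeff t * f t), Finset.sum_range_add]
  simp only [coeff_X_pow_mul', Nat.le_add_right, if_true, Nat.add_sub_cancel_left]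
  rw [Finset.sum_eq_zero fun t ht => by simp [(Finset.mem_range.mp ht).not_ge], zero_add, fracCoeff]
  refine Finset.sum_subset (Finset.range_subset_range.mpr (by omega)) fun j _ hj => ?_
  rw [coeff_eq_zero_of_natDegree_lt (by simpa using hj), zero_mul]

theorem shiftMatrix_mulVec {q : ℕ} {ι : Type*} [Fintype ι] (k : ι → (ZMod q)[X]) {R N : ℕ}
    (f : ι → ℕ → ZMod q) (n : Fin R) (hN : ∀ i, n + (k i).natDegree < N) :
    (shiftMatrix k R N *ᵥ fun p => f p.1 p.2) n = ∑ i, fracCoeff q (k i) (f i) n := by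
  simp only [Matrix.mulVec, dotProduct, shiftMatrix, Matrix.of_apply, Fintype.sum_prod_type]
  exact Finset.sum_congr rfl fun i _ => (fracCoeff_eq_sum_coeff _ _ (hN i)).symm

theorem vecMul_shiftMatrix {F ι : Type*} [CommSemiring F] [DecidableEq F] (k : ι → F[X])
    {R N : ℕ} (a : Fin R → F) (i : ι) (t : Fin N) :
    (a ᵥ* shiftMatrix k R N) (i, t) = (ofFn R a * k i).coeff t := by
  simp only [Matrix.vecMul, dotProduct, shiftMatrix, Matrix.of_apply, ofFn_eq_sum_monomial,
    Finset.sum_mul, finsetSum_coeff, ← C_mul_X_pow_eq_monomial, mul_assoc, coeff_C_mul]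

theorem fromRows_shiftMatrix_vecMul_injective {F ι : Type*} [Field F] [Fintype ι]
    {k b : ι → F[X]} (hk : ∀ d, (∀ i, d ∣ k i) → IsUnit d)
    (hb : ∀ i, b i = 0 ∨ IsCoprime (b i) (k i)) (hb0 : ¬∀ i, b i = 0) {i₀ : ι}
    (hi₀ : 0 < (k i₀).natDegree) {R₁ R₂ N : ℕ}
    (hN : ∀ i, R₁ + (k i).natDegree < N ∧ R₂ + (k i + b i).natDegree < N) :
    Function.Injective
      (fromRows (shiftMatrix k R₁ N) (shiftMatrix (fun i => k i + b i) R₂ N)).vecMul := by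
  classical
  rw [← Matrix.coe_vecMulLinear, injective_iff_map_eq_zero]
  intro c hc
  set u := ofFn R₁ (c ∘ Sum.inl)
  set v := ofFn R₂ (c ∘ Sum.inr)
  have hu : u.natDegree ≤ R₁ := natDegree_le_of_degree_le (ofFn_degree_lt _).le
  have hv : v.natDegree ≤ R₂ := natDegree_le_of_degree_le (ofFn_degree_lt _).le
  have hrel : ∀ i, u * k i + v * (k i + b i) = 0 := by
    intro i
    ext t
    by_cases ht : t < N
    · simpa [vecMul_shiftMatrix] using congrFun hc (i, ⟨t, ht⟩)
    · obtain ⟨h₁, h₂⟩ := hN i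
      refine coeff_eq_zero_of_natDegree_lt ((natDegree_add_le _ _).trans_lt (max_lt ?_ ?_))
      · exact natDegree_mul_le.trans_lt (by omega)
      · exact natDegree_mul_le.trans_lt (by omega)
  obtain ⟨hu0, hv0⟩ := eq_zero_of_forall_mul_add_mul_add_eq_zero hk hb hb0
    (ne_zero_of_natDegree_gt hi₀) (fun h => hi₀.ne' (natDegree_eq_zero_of_isUnit h)) hrel
  ext (j | j)
  · exact congrFun (injective_ofFn R₁ (hu0.trans (map_zero _).symm)) j
  · exact congrFun (injective_ofFn R₂ (hv0.trans (map_zero _).symm)) j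

theorem card_ker_mulVecLin_mul_pow_card {F m n : Type*} [Field F] [Fintype F] [Fintype m]
    [Fintype n] (M : Matrix m n F) (h : Function.Injective M.vecMul) :
    Nat.card (LinearMap.ker M.mulVecLin) * Fintype.card F ^ Fintype.card m =
      Fintype.card F ^ Fintype.card n := by
  classical
  have hrank : M.rank = Fintype.card m := (vecMul_injective_iff.mp h).rank_matrix
  have hsum := LinearMap.finrank_range_add_finrank_ker M.mulVecLin
  rw [Matrix.rank] at hrank
  rw [Nat.card_eq_fintype_card, Module.card_eq_pow_finrank (K := F), ← pow_add, ← hrank, add_comm,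
    hsum, Module.finrank_fintype_fun_eq_card]

theorem ENNReal.mul_inv_pow_eq_inv_pow_of_mul_pow_eq {a c : ℝ≥0∞} (ha₀ : a ≠ 0) (ha : a ≠ ⊤)
    {R D : ℕ} (h : c * a ^ R = a ^ D) : c * a⁻¹ ^ D = a⁻¹ ^ R := by
  have hpow (n : ℕ) : a ^ n * a⁻¹ ^ n = 1 := by
    rw [← mul_pow, ENNReal.mul_inv_cancel ha₀ ha, one_pow]
  calc c * a⁻¹ ^ D = c * a⁻¹ ^ D * (a ^ R * a⁻¹ ^ R) := by rw [hpow, mul_one]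
    _ = (c * a ^ R) * a⁻¹ ^ D * a⁻¹ ^ R := by ring
    _ = a⁻¹ ^ R := by rw [h, hpow, one_mul]

def doubleConditionSet {q : ℕ} {ι : Type*} [Fintype ι] (k b : ι → (ZMod q)[X]) : Set (ι → ℝ) :=
  {f | (∀ i, f i ∈ Set.Ico 0 1) ∧
    (∀ n : ℕ, n + 2 ≤ ∑ i, (k i).natDegree →
      ∑ i, fracCoeff q (k i) (qDigit q (f i)) n = 0) ∧
    (∀ n : ℕ, n + 2 ≤ (∑ i, (k i).natDegree) / 2 →
      ∑ i, fracCoeff q (k i + b i) (qDigit q (f i)) n = 0)}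

theorem volume_doubleConditionSet_le {q : ℕ} [Fact q.Prime] {ι : Type*} [Fintype ι]
    {k b : ι → (ZMod q)[X]} (hk : ∀ d, (∀ i, d ∣ k i) → IsUnit d)
    (hb : ∀ i, b i = 0 ∨ IsCoprime (b i) (k i)) (hb0 : ¬∀ i, b i = 0) :
    volume (doubleConditionSet k b) ≤
      (q : ℝ≥0∞)⁻¹ ^ (∑ i, (k i).natDegree - 1 + ((∑ i, (k i).natDegree) / 2 - 1)) := by
  set m := ∑ i, (k i).natDegree
  -- every condition reads only digits below `N`, and `N` exceeds the degree of the
  -- polynomial relation attached to any row dependency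
  set N := 2 * m + ∑ i, (k i + b i).natDegree + 1
  set M := fromRows (shiftMatrix k (m - 1) N) (shiftMatrix (fun i => k i + b i) (m / 2 - 1) N)
  have hdeg : ∀ i, (k i).natDegree ≤ m := fun i =>
    Finset.single_le_sum (f := fun i => (k i).natDegree) (fun _ _ => Nat.zero_le _)
      (Finset.mem_univ i)
  have hdeg' : ∀ i, (k i + b i).natDegree ≤ ∑ i, (k i + b i).natDegree := fun i =>
    Finset.single_le_sum (f := fun i => (k i + b i).natDegree) (fun _ _ => Nat.zero_le _)
      (Finset.mem_univ i)
  have hinj : Function.Injective M.vecMul := by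
    rcases Nat.eq_zero_or_pos m with hm | hm
    · intro _ _ _
      funext j
      rcases j with ⟨j, hj⟩ | ⟨j, hj⟩ <;> omega
    obtain ⟨i₀, hi₀⟩ : ∃ i, 0 < (k i).natDegree := by
      by_contra! h
      exact hm.ne' (Finset.sum_eq_zero fun i _ => Nat.eq_zero_of_le_zero (h i))
    exact fromRows_shiftMatrix_vecMul_injective hk hb hb0 hi₀ fun i =>
      ⟨by have := hdeg i; omega, by have := hdeg' i; omega⟩
  have hsub : doubleConditionSet k b ⊆ {f | (∀ i, f i ∈ Set.Ico 0 1) ∧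
      (fun p : ι × Fin N => qDigit q (f p.1) p.2) ∈ (LinearMap.ker M.mulVecLin : Set _)} := by
    rintro f ⟨hf, h₁, h₂⟩
    refine ⟨hf, ?_⟩
    simp only [SetLike.mem_coe, LinearMap.mem_ker, Matrix.mulVecLin_apply, M, fromRows_mulVec]
    ext (n | n)
    · rw [Sum.elim_inl, shiftMatrix_mulVec _ (fun i => qDigit q (f i)) n
        fun i => by have := hdeg i; omega]
      exact h₁ n (by omega)
    · rw [Sum.elim_inr, shiftMatrix_mulVec _ (fun i => qDigit q (f i)) n
        fun i => by have := hdeg' i; omega]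
      exact h₂ n (by omega)
  have hcard := card_ker_mulVecLin_mul_pow_card M hinj
  simp only [ZMod.card, Fintype.card_sum, Fintype.card_fin] at hcard
  calc volume (doubleConditionSet k b) ≤ _ := measure_mono hsub
    _ ≤ _ := volume_qDigits_mem_le N _
    _ = _ := ENNReal.mul_inv_pow_eq_inv_pow_of_mul_pow_eq (by simp [(Fact.out : q.Prime).ne_zero])
        (ENNReal.natCast_ne_top q) (by exact_mod_cast hcard)

instance {R : Type*} [Semiring R] [Countable R] : Countable R[X] :=
  (AddMonoidAlgebra.coeff_injective.comp toFinsupp_injective).countable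

theorem ENNReal.tsum_fin_pi_prod {α : Type*} (g : α → ℝ≥0∞) :
    ∀ s : ℕ, ∑' k : Fin s → α, ∏ i, g (k i) = (∑' a, g a) ^ s
  | 0 => by simp
  | s + 1 => by
    rw [← (Fin.consEquiv fun _ => α).tsum_eq, ENNReal.tsum_prod', pow_succ',
      ← ENNReal.tsum_fin_pi_prod g s, ← ENNReal.tsum_mul_right]
    refine tsum_congr fun a => ?_
    rw [← ENNReal.tsum_mul_left]
    exact tsum_congr fun k => by simp [Fin.consEquiv, Fin.prod_univ_succ]

theorem ENNReal.tsum_inv_pow_div_two_ne_top {a : ℝ≥0∞} (ha : 1 < a) :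
    ∑' r : ℕ, a⁻¹ ^ (r / 2) ≠ ⊤ := by
  rw [← tsum_even_add_odd ENNReal.summable ENNReal.summable]
  have heven (j : ℕ) : 2 * j / 2 = j := by omega
  have hodd (j : ℕ) : (2 * j + 1) / 2 = j := by omega
  have hgeom : (1 - a⁻¹)⁻¹ ≠ ⊤ :=
    ENNReal.inv_ne_top.mpr (tsub_pos_of_lt (ENNReal.inv_lt_one.mpr ha)).ne'
  simp only [heven, hodd, ENNReal.tsum_geometric]
  exact ENNReal.add_ne_top.mpr ⟨hgeom, hgeom⟩

theorem Polynomial.tsum_inv_card_pow_ne_top {F : Type*} [Semiring F] [Fintype F] [Nontrivial F] :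
    ∑' p : F[X], (Fintype.card F : ℝ≥0∞)⁻¹ ^ (p.natDegree + p.natDegree / 2) ≠ ⊤ := by
  classical
  set c : ℝ≥0∞ := (Fintype.card F : ℝ≥0∞)
  have hc₀ : c ≠ 0 := by simp [c]
  have hc : c ≠ ⊤ := ENNReal.natCast_ne_top _
  have hfiber (r : ℕ) : ENat.card (natDegree ⁻¹' {r} : Set F[X]) ≤ Fintype.card F ^ (r + 1) := by
    have hinj : Function.Injective fun p : (natDegree ⁻¹' {r} : Set F[X]) => toFn (r + 1) p.1 := by
      intro p p' h
      have hp : (p : F[X]).natDegree < r + 1 := Nat.lt_succ_of_le (le_of_eq p.2)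
      have hp' : (p' : F[X]).natDegree < r + 1 := Nat.lt_succ_of_le (le_of_eq p'.2)
      have h' : toFn (r + 1) p.1 = toFn (r + 1) p'.1 := h
      exact Subtype.ext (by rw [← ofFn_comp_toFn_eq_id_of_natDegree_lt hp,
        ← ofFn_comp_toFn_eq_id_of_natDegree_lt hp', h'])
    simpa using ENat.card_le_card_of_injective hinj
  rw [← lt_top_iff_ne_top]
  calc ∑' p : F[X], c⁻¹ ^ (p.natDegree + p.natDegree / 2)
      = ∑' (r : ℕ) (_ : (natDegree ⁻¹' {r} : Set F[X])), c⁻¹ ^ (r + r / 2) := by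
        rw [← ENNReal.tsum_fiberwise _ natDegree]
        exact tsum_congr fun r => tsum_congr fun p => by rw [p.2.out]
    _ ≤ ∑' r : ℕ, c ^ (r + 1) * c⁻¹ ^ (r + r / 2) := by
        gcongr with r
        rw [ENNReal.tsum_const]
        gcongr
        simpa [c] using ENat.toENNReal_le.mpr (hfiber r)
    _ = c * ∑' r : ℕ, c⁻¹ ^ (r / 2) := by
        rw [← ENNReal.tsum_mul_left]
        refine tsum_congr fun r => ?_
        rw [pow_succ', pow_add, mul_assoc, ← mul_assoc (c ^ r), ← mul_pow,
          ENNReal.mul_inv_cancel hc₀ hc, one_pow, one_mul]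
    _ < ⊤ := ENNReal.mul_lt_top hc.lt_top
        (ENNReal.tsum_inv_pow_div_two_ne_top (Nat.one_lt_cast.mpr Fintype.one_lt_card)).lt_top

theorem ENNReal.inv_pow_le_sq_mul_prod_inv_pow {a : ℝ≥0∞} (ha : 1 ≤ a) (ha' : a ≠ ⊤) {ι : Type*}
    [Fintype ι] (d : ι → ℕ) :
    a⁻¹ ^ (∑ i, d i - 1 + ((∑ i, d i) / 2 - 1)) ≤ a ^ 2 * ∏ i, a⁻¹ ^ (d i + d i / 2) := by
  have hhalf : ∑ i, d i / 2 ≤ (∑ i, d i) / 2 := by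
    rw [Nat.le_div_iff_mul_le two_pos, Finset.sum_mul]
    exact Finset.sum_le_sum fun i _ => Nat.div_mul_le_self _ _
  have hsq : a ^ 2 * a⁻¹ ^ 2 = 1 := by
    rw [← mul_pow, ENNReal.mul_inv_cancel (zero_lt_one.trans_le ha).ne' ha', one_pow]
  rw [Finset.prod_pow_eq_pow_sum, Finset.sum_add_distrib]
  set A := ∑ i, d i - 1 + ((∑ i, d i) / 2 - 1)
  calc a⁻¹ ^ A = a ^ 2 * a⁻¹ ^ (A + 2) := by rw [pow_add a⁻¹ A 2, mul_left_comm, hsq, mul_one]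
    _ ≤ a ^ 2 * a⁻¹ ^ (∑ i, d i + ∑ i, d i / 2) :=
        mul_le_mul_right (pow_le_pow_right_of_le_one' (ENNReal.inv_le_one.mpr ha) (by omega)) _

theorem tsum_volume_doubleConditionSet_ne_top {q : ℕ} [Fact q.Prime] {s : ℕ}
    (B : Fin s → (ZMod q)[X] → (ZMod q)[X]) (hB : ∀ j k, B j k = 0 ∨ IsCoprime (B j k) k)
    (hB0 : ∀ k : Fin s → (ZMod q)[X], ¬∀ j, B j (k j) = 0) :
    ∑' k : {k : Fin s → (ZMod q)[X] // GcdOne k},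
      volume (doubleConditionSet k.1 fun i => B i (k.1 i)) ≠ ⊤ := by
  have hq : (1 : ℝ≥0∞) ≤ q := Nat.one_le_cast.mpr (Fact.out : q.Prime).one_lt.le
  set g : (ZMod q)[X] → ℝ≥0∞ := fun p => (q : ℝ≥0∞)⁻¹ ^ (p.natDegree + p.natDegree / 2)
  have hg : ∑' p, g p ≠ ⊤ := by
    have := Polynomial.tsum_inv_card_pow_ne_top (F := ZMod q)
    rwa [ZMod.card] at this
  rw [← lt_top_iff_ne_top]
  calc ∑' k : {k : Fin s → (ZMod q)[X] // GcdOne k},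
        volume (doubleConditionSet k.1 fun i => B i (k.1 i))
      ≤ ∑' k : {k : Fin s → (ZMod q)[X] // GcdOne k}, (q : ℝ≥0∞) ^ 2 * ∏ i, g (k.1 i) :=
        ENNReal.tsum_le_tsum fun k =>
          (volume_doubleConditionSet_le k.2 (fun i => hB i _) (hB0 k.1)).trans
            (ENNReal.inv_pow_le_sq_mul_prod_inv_pow hq (ENNReal.natCast_ne_top q)
              fun i => (k.1 i).natDegree)
    _ ≤ ∑' k : Fin s → (ZMod q)[X], (q : ℝ≥0∞) ^ 2 * ∏ i, g (k i) :=
        ENNReal.tsum_comp_le_tsum_of_injective (f := Subtype.val) Subtype.val_injective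
          (fun k : Fin s → (ZMod q)[X] => (q : ℝ≥0∞) ^ 2 * ∏ i, g (k i))
    _ = (q : ℝ≥0∞) ^ 2 * (∑' p, g p) ^ s := by
        rw [ENNReal.tsum_mul_left, ENNReal.tsum_fin_pi_prod]
    _ < ⊤ := ENNReal.mul_lt_top (by simp) (ENNReal.pow_lt_top hg.lt_top)

theorem measure_zero_of_double_condition_general (q : ℕ) (hq : q.Prime) (s : ℕ)
    (B : Fin s → Polynomial (ZMod q) → Polynomial (ZMod q))
    (hB : ∀ j k, B j k = 0 ∨ IsCoprime (B j k) k)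
    (hB0 : ∀ k : Fin s → Polynomial (ZMod q), ¬ ∀ j, B j (k j) = 0) :
    volume {f : Fin s → ℝ | (∀ i, f i ∈ Set.Ico (0:ℝ) 1) ∧
        {k : Fin s → Polynomial (ZMod q) |
          (∀ i, k i ≠ 0) ∧ GcdOne k ∧
          (∀ n : ℕ, n + 2 ≤ ∑ i, (k i).natDegree →
            ∑ i, fracCoeff q (k i) (qDigit q (f i)) n = 0) ∧
          (∀ n : ℕ, n + 2 ≤ (∑ i, (k i).natDegree) / 2 →
            ∑ i, fracCoeff q (k i + B i (k i)) (qDigit q (f i)) n = 0)}.Infinite} =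
      0 := by
  have := Fact.mk hq
  refine measure_mono_null ?_
    (measure_limsup_cofinite_eq_zero (tsum_volume_doubleConditionSet_ne_top B hB hB0))
  rintro f ⟨hf, hinf⟩
  rw [Filter.mem_limsup_iff_frequently_mem, Filter.frequently_cofinite_iff_infinite]
  refine Set.Infinite.of_image Subtype.val (hinf.mono ?_)
  rintro k ⟨-, hgcd, h₁, h₂⟩
  exact ⟨⟨k, hgcd⟩, ⟨hf, h₁, h₂⟩, rfl⟩

/-- Lemma 3 of the paper: given perturbation functions `B_j` (with `B_j(k)` always
zero or coprime to `k`, and not all zero on any tuple), the set of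
`(f_1,…,f_s) ∈ Z̄^s` for which infinitely many tuples `(k_1,…,k_s)` of nonzero
polynomials with gcd `1` satisfy both `ν({∑ k_j f_j}) ≤ -(r_1+⋯+r_s)` and
`ν({∑ (k_j + B_j(k_j)) f_j}) ≤ -⌊(r_1+⋯+r_s)/2⌋` (where `r_j = deg k_j`) has Haar
measure zero. -/
theorem measure_zero_of_double_condition (q : ℕ) (hq : q.Prime) (s : ℕ) (hs : 1 ≤ s)
    (B : Fin s → Polynomial (ZMod q) → Polynomial (ZMod q))
    (hB : ∀ j k, B j k = 0 ∨ IsCoprime (B j k) k)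
    (hB0 : ∀ k : Fin s → Polynomial (ZMod q), ¬ ∀ j, B j (k j) = 0) :
    volume {f : Fin s → ℝ | (∀ i, f i ∈ Set.Ico (0:ℝ) 1) ∧
        {k : Fin s → Polynomial (ZMod q) |
          (∀ i, k i ≠ 0) ∧ GcdOne k ∧
          (∀ n : ℕ, n + 2 ≤ ∑ i, (k i).natDegree →
            ∑ i, fracCoeff q (k i) (qDigit q (f i)) n = 0) ∧
          (∀ n : ℕ, n + 2 ≤ (∑ i, (k i).natDegree) / 2 →
            ∑ i, fracCoeff q (k i + B i (k i)) (qDigit q (f i)) n = 0)}.Infinite} =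
      0 :=
  measure_zero_of_double_condition_general q hq s B hB hB0
end

section
/- Let q be prime and s ∈ ℕ. Let P be a set of s-tuples (k_1,...,k_s) of nonzero polynomials over F_q with gcd(k_1,...,k_s) = 1, excluding (1,...,1), and let F: ℕ₀^s → ℕ satisfy ∑_{(k_1,...,k_s)∈P} q^{−F(deg k_1,...,deg k_s)} = ∞. Then for μ_s-almost all (f_1,...,f_s) ∈ Z̄^s, there exist infinitely many (k_1,...,k_s) ∈ P with ν({k_1 f_1 + ⋯ + k_s f_s}) ≤ −F(deg k_1, ..., deg k_s). -/
open MeasureTheory Finset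

/-!
Identify `Z̄` with `[0, 1)` through base-`q` digits, so that Haar measure becomes Lebesgue measure.
The event `ν({k₁f₁ + ⋯ + k_sf_s}) ≤ -(M + 1)` says that the first `M` fractional coefficients of
`∑ kᵢfᵢ` vanish; on the first `N` digits of the `fᵢ` this is the kernel of a Toeplitz-type
matrix, so it has measure `q^{-M}` as soon as that matrix has full row rank. For two tuples, a
dependence among the rows of the stacked matrix is a relation `A k + B k' = 0` with
`deg A < M₁`, `deg B < M₂`; comparing gcds, tuples of gcd `1` admit such a relation only if `k`
is a scalar multiple of `k'`. Hence each event is independent of all others except the at most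
`q - 1` attached to scalar multiples of its tuple, and Chebyshev's inequality for the number of
events hit among the first `N` shows that almost every point lies in infinitely many of them.
-/

open Polynomial
open scoped ENNReal Matrix

instance Polynomial.countable {R : Type*} [Semiring R] [Countable R] : Countable R[X] :=
  Function.Injective.countable (f := fun p : R[X] => p.toFinsupp.coeff) fun p p' h => by
    simpa using h

lemma Polynomial.coeff_mul_eq_zero_of_degree_lt {R : Type*} [Semiring R] {A k : R[X]} {M N m : ℕ}
    (hA : A.degree < M) (hk : M + k.natDegree ≤ N) (hm : N ≤ m) : (A * k).coeff m = 0 := by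
  rcases eq_or_ne A 0 with rfl | hA0
  · simp
  have := (natDegree_lt_iff_degree_lt hA0).2 hA
  exact coeff_eq_zero_of_natDegree_lt (natDegree_mul_le.trans_lt (by omega))

namespace Matrix

variable {K ι κ : Type*} [Field K] [Fintype ι] [Fintype κ] {A : Matrix ι κ K}

lemma mulVec_surjective_of_vecMul_injective (h : Function.Injective A.vecMul) :
    Function.Surjective A.mulVec := by
  have hrange : LinearMap.range A.mulVecLin = ⊤ := by
    apply Submodule.eq_top_of_finrank_eq
    rw [← rank, (vecMul_injective_iff.1 h).rank_matrix, Module.finrank_fintype_fun_eq_card]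
  exact LinearMap.range_eq_top.1 hrange

lemma natCard_setOf_mulVec_eq_zero_mul [Finite K] (h : Function.Surjective A.mulVec) :
    Nat.card {v : κ → K | A *ᵥ v = 0} * Nat.card K ^ Fintype.card ι =
      Nat.card K ^ Fintype.card κ := by
  have hker : Nat.card {v : κ → K | A *ᵥ v = 0} = Nat.card (LinearMap.ker A.mulVecLin) := rfl
  have hrange : Module.finrank K (LinearMap.range A.mulVecLin) = Fintype.card ι := by
    rw [LinearMap.range_eq_top.2 h, finrank_top, Module.finrank_fintype_fun_eq_card]
  rw [hker, Module.natCard_eq_pow_finrank (K := K), ← pow_add, add_comm, ← hrange,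
    LinearMap.finrank_range_add_finrank_ker, Module.finrank_fintype_fun_eq_card]

end Matrix

lemma Set.encard_preimage_orbit_le {G α ι : Type*} [Group G] [MulAction G α] {e : ι → α}
    (he : Function.Injective e) (x : α) :
    (e ⁻¹' MulAction.orbit G x).encard ≤ ENat.card G :=
  calc (e ⁻¹' MulAction.orbit G x).encard = (e '' (e ⁻¹' MulAction.orbit G x)).encard :=
        (he.encard_image _).symm
    _ ≤ (MulAction.orbit G x).encard := Set.encard_le_encard (Set.image_preimage_subset _ _)
    _ ≤ ENat.card G := by
        rw [MulAction.orbit, ← Set.image_univ, ← Set.encard_univ]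
        exact Set.encard_image_le _ _

section BorelCantelli

open ProbabilityTheory Filter Topology

variable {Ω : Type*} [MeasurableSpace Ω] {μ : Measure Ω} [IsProbabilityMeasure μ]
  {A : ℕ → Set Ω}

lemma memLp_indicator_one {s : Set Ω} (hs : MeasurableSet s) :
    MemLp (s.indicator (1 : Ω → ℝ)) 2 μ :=
  memLp_indicator_const 2 hs 1 (Or.inr (measure_ne_top _ _))

lemma covariance_indicator_one {s t : Set Ω} (hs : MeasurableSet s) (ht : MeasurableSet t) :
    cov[s.indicator 1, t.indicator 1; μ] = μ.real (s ∩ t) - μ.real s * μ.real t := by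
  rw [covariance_eq_sub (memLp_indicator_one hs) (memLp_indicator_one ht),
    ← Set.inter_indicator_one,
    integral_indicator_one (hs.inter ht), integral_indicator_one hs, integral_indicator_one ht]

variable {C : ℕ}

lemma variance_sum_indicator_le (hA : ∀ n, MeasurableSet (A n))
    (hdep : ∀ n, {m | μ (A n ∩ A m) ≠ μ (A n) * μ (A m)}.encard ≤ C) (N : ℕ) :
    Var[∑ n ∈ range N, (A n).indicator 1; μ] ≤ C * ∑ n ∈ range N, μ.real (A n) := by
  rw [variance_sum' fun n _ => memLp_indicator_one (hA n), Finset.mul_sum]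
  refine Finset.sum_le_sum fun n _ => ?_
  set D := (range N).filter fun m => μ (A n ∩ A m) ≠ μ (A n) * μ (A m)
  have hD : D.card ≤ C := by
    have : (D : Set ℕ).encard ≤ C := by
      refine (Set.encard_le_encard fun m hm => ?_).trans (hdep n)
      simp only [D, Finset.coe_filter] at hm
      exact hm.2
    exact_mod_cast (Set.encard_coe_eq_coe_finsetCard D).symm.trans_le this
  calc ∑ m ∈ range N, cov[(A n).indicator 1, (A m).indicator 1; μ]
      = ∑ m ∈ D, cov[(A n).indicator 1, (A m).indicator 1; μ] := by
        refine (Finset.sum_filter_of_ne ?_).symm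
        intro m _ hcov hindep
        apply hcov
        rw [covariance_indicator_one (hA n) (hA m), measureReal_def, measureReal_def,
          measureReal_def, hindep, ENNReal.toReal_mul, sub_self]
    _ ≤ ∑ m ∈ D, μ.real (A n) := Finset.sum_le_sum fun m _ => by
        rw [covariance_indicator_one (hA n) (hA m)]
        have := measureReal_mono (μ := μ) (Set.inter_subset_left (s := A n) (t := A m))
        nlinarith [measureReal_nonneg (μ := μ) (s := A n), measureReal_nonneg (μ := μ) (s := A m)]
    _ ≤ C * μ.real (A n) := by
        rw [Finset.sum_const, nsmul_eq_mul]
        gcongr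

lemma measure_sum_indicator_le_half_le (hA : ∀ n, MeasurableSet (A n))
    (hdep : ∀ n, {m | μ (A n ∩ A m) ≠ μ (A n) * μ (A m)}.encard ≤ C) {N : ℕ}
    (hpos : 0 < ∑ n ∈ range N, μ.real (A n)) :
    μ {ω | (∑ n ∈ range N, (A n).indicator 1) ω ≤ (∑ n ∈ range N, μ.real (A n)) / 2} ≤
      ENNReal.ofReal (4 * C / ∑ n ∈ range N, μ.real (A n)) := by
  set S : Ω → ℝ := ∑ n ∈ range N, (A n).indicator 1
  set E := ∑ n ∈ range N, μ.real (A n)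
  have hmean : μ[S] = E := by
    simp only [S, E, Finset.sum_apply]
    rw [integral_finsetSum _ fun n _ => (memLp_indicator_one (hA n)).integrable one_le_two]
    exact Finset.sum_congr rfl fun n _ => integral_indicator_one (hA n)
  have hsub : {ω | S ω ≤ E / 2} ⊆ {ω | E / 2 ≤ |S ω - μ[S]|} := fun ω hω => by
    simp only [Set.mem_ofPred_eq, hmean] at hω ⊢
    rw [abs_sub_comm, abs_of_nonneg (by linarith)]
    linarith
  have hS : MemLp S 2 μ := memLp_finsetSum' _ fun n _ => memLp_indicator_one (hA n)
  calc μ {ω | S ω ≤ E / 2} ≤ ENNReal.ofReal (Var[S; μ] / (E / 2) ^ 2) :=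
        (measure_mono hsub).trans (meas_ge_le_variance_div_sq hS (by positivity))
    _ ≤ ENNReal.ofReal (4 * C / E) := by
        refine ENNReal.ofReal_le_ofReal ?_
        rw [div_le_div_iff₀ (by positivity) hpos]
        nlinarith [variance_sum_indicator_le hA hdep N]

theorem ae_infinite_setOf_mem_of_tsum_eq_top (hA : ∀ n, MeasurableSet (A n))
    (hdep : ∀ n, {m | μ (A n ∩ A m) ≠ μ (A n) * μ (A m)}.encard ≤ C) (hsum : ∑' n, μ (A n) = ∞) :
    ∀ᵐ ω ∂μ, {n | ω ∈ A n}.Infinite := by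
  set E : ℕ → ℝ := fun N => ∑ n ∈ range N, μ.real (A n)
  have hE : Tendsto E atTop atTop := by
    refine (not_summable_iff_tendsto_nat_atTop_of_nonneg fun n => measureReal_nonneg).1 fun h => ?_
    have := ENNReal.ofReal_tsum_of_nonneg (fun n => measureReal_nonneg) h
    simp only [measureReal_def, ENNReal.ofReal_toReal (measure_ne_top μ _), hsum] at this
    exact ENNReal.ofReal_ne_top this
  have hlim : Tendsto (fun N => ENNReal.ofReal (4 * C / E N)) atTop (𝓝 0) := by
    simpa using ENNReal.tendsto_ofReal (tendsto_const_nhds.div_atTop hE)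
  have hnull (t : ℕ) :
      μ (⋂ N, {ω | (∑ n ∈ range N, (A n).indicator 1) ω ≤ (t : ℝ)}) = 0 := by
    refine le_antisymm (ge_of_tendsto hlim ?_) bot_le
    filter_upwards [hE.eventually_ge_atTop (2 * t), hE.eventually_gt_atTop 0] with N h2t hpos
    refine (measure_mono fun ω hω => ?_).trans (measure_sum_indicator_le_half_le hA hdep hpos)
    have := Set.mem_iInter.1 hω N
    simp only [Set.mem_ofPred_eq] at this ⊢
    linarith
  classical
  rw [ae_iff]
  refine measure_mono_null (fun ω hω => ?_) (measure_iUnion_null hnull)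
  have hfin : {n | ω ∈ A n}.Finite := Set.not_infinite.1 hω
  refine Set.mem_iUnion.2 ⟨hfin.toFinset.card, Set.mem_iInter.2 fun N => ?_⟩
  simp only [Set.mem_ofPred_eq, Finset.sum_apply, Set.indicator_apply, Pi.one_apply]
  rw [Finset.sum_boole]
  exact_mod_cast Finset.card_le_card fun n hn => hfin.mem_toFinset.2 (Finset.mem_filter.1 hn).2

end BorelCantelli

section Digits

variable {q : ℕ} [NeZero q]

def leadingDigits (q N L : ℕ) (m : Fin N) : ZMod q :=
  ((L / q ^ (N - 1 - m) : ℕ) : ZMod q)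

lemma qDigit_eq_leadingDigits {x : ℝ} (hx : 0 ≤ x) {N : ℕ} (m : Fin N) :
    qDigit q x m = leadingDigits q N ⌊x * q ^ N⌋₊ m := by
  have hq : (0 : ℝ) < q := by exact_mod_cast NeZero.pos q
  have hpow : x * q ^ ((m : ℕ) + 1) = x * q ^ N / ((q ^ (N - 1 - m) : ℕ) : ℝ) := by
    rw [eq_div_iff (by simp [NeZero.ne q]), Nat.cast_pow, mul_assoc, ← pow_add]
    congr 2
    omega
  rw [qDigit, leadingDigits, ← Int.natCast_floor_eq_floor (by positivity), hpow,
    Nat.floor_div_natCast]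
  norm_cast

lemma leadingDigits_bijective (N : ℕ) :
    Function.Bijective (fun L : Fin (q ^ N) => leadingDigits q N L) := by
  refine (Fintype.bijective_iff_injective_and_card _).2 ⟨fun L L' h => ?_, by simp⟩
  apply finFunctionFinEquiv.symm.injective
  ext j
  have hj := congrArg ZMod.val (congrFun h (Fin.rev j))
  simp only [leadingDigits, Fin.val_rev, ZMod.val_natCast] at hj
  simpa [finFunctionFinEquiv_symm_apply_val, show N - 1 - (N - (j + 1)) = j by omega] using hj

lemma setOf_floor_mul_pow_eq {N L : ℕ} (hL : L < q ^ N) :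
    {x : ℝ | x ∈ Set.Ico 0 1 ∧ ⌊x * q ^ N⌋₊ = L} =
      Set.Ico ((L : ℝ) / q ^ N) ((L + 1) / q ^ N) := by
  have hqN : (0 : ℝ) < q ^ N := pow_pos (by exact_mod_cast NeZero.pos q) N
  have hL' : (L : ℝ) + 1 ≤ q ^ N := by exact_mod_cast hL
  ext x
  simp only [Set.mem_ofPred_eq, Set.mem_Ico, div_le_iff₀ hqN, lt_div_iff₀ hqN]
  constructor
  · rintro ⟨⟨hx0, -⟩, rfl⟩
    exact ⟨Nat.floor_le (by positivity), Nat.lt_floor_add_one _⟩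
  · rintro ⟨hlo, hhi⟩
    have hx0 : 0 ≤ x := nonneg_of_mul_nonneg_left ((Nat.cast_nonneg L).trans hlo) hqN
    exact ⟨⟨hx0, by nlinarith⟩, (Nat.floor_eq_iff (by positivity)).2 ⟨hlo, hhi⟩⟩

lemma digitCylinder_eq_Ico {N : ℕ} (L : Fin (q ^ N)) :
    {x : ℝ | x ∈ Set.Ico 0 1 ∧ ∀ m : Fin N, qDigit q x m = leadingDigits q N L m} =
      Set.Ico ((L : ℝ) / q ^ N) ((L + 1) / q ^ N) := by
  rw [← setOf_floor_mul_pow_eq L.isLt]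
  ext x
  simp only [Set.mem_ofPred_eq, and_congr_right_iff]
  rintro ⟨hx0, hx1⟩
  have hqN : (0 : ℝ) < q ^ N := pow_pos (by exact_mod_cast NeZero.pos q) N
  have hfloor : ⌊x * q ^ N⌋₊ < q ^ N :=
    (Nat.floor_lt (by positivity)).2 (by push_cast; nlinarith)
  simp only [qDigit_eq_leadingDigits hx0]
  constructor
  · intro h
    exact congrArg Fin.val ((leadingDigits_bijective N).1 (a₁ := ⟨_, hfloor⟩) (funext h))
  · intro h m
    rw [h]

lemma volume_digitCylinder {N : ℕ} (w : Fin N → ZMod q) :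
    volume {x : ℝ | x ∈ Set.Ico 0 1 ∧ ∀ m : Fin N, qDigit q x m = w m} =
      ((q : ℝ≥0∞) ^ N)⁻¹ := by
  obtain ⟨L, rfl⟩ := (leadingDigits_bijective N).2 w
  rw [digitCylinder_eq_Ico, Real.volume_Ico, ← sub_div, add_sub_cancel_left, one_div,
    ENNReal.ofReal_inv_of_pos (pow_pos (by exact_mod_cast NeZero.pos q) N)]
  norm_cast

lemma measurableSet_digitCylinder {N : ℕ} (w : Fin N → ZMod q) :
    MeasurableSet {x : ℝ | x ∈ Set.Ico 0 1 ∧ ∀ m : Fin N, qDigit q x m = w m} := by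
  obtain ⟨L, rfl⟩ := (leadingDigits_bijective N).2 w
  rw [digitCylinder_eq_Ico]
  exact measurableSet_Ico

end Digits

section DigitVectors

variable {q s : ℕ}

noncomputable def digitVec (q N : ℕ) (f : Fin s → ℝ) : Fin s × Fin N → ZMod q :=
  fun p => qDigit q (f p.1) p.2

lemma setOf_digitVec_eq (N : ℕ) (v : Fin s × Fin N → ZMod q) :
    {f : Fin s → ℝ | (∀ i, f i ∈ Set.Ico 0 1) ∧ digitVec q N f = v} =
      Set.univ.pi fun i => {x | x ∈ Set.Ico 0 1 ∧ ∀ m : Fin N, qDigit q x m = v (i, m)} := by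
  ext f
  simp only [Set.mem_ofPred_eq, Set.mem_pi, Set.mem_univ, true_imp_iff, funext_iff, digitVec,
    Prod.forall, forall_and]

variable [NeZero q]

lemma setOf_digitVec_mem_eq_biUnion (N : ℕ) (S : Set (Fin s × Fin N → ZMod q)) :
    {f : Fin s → ℝ | (∀ i, f i ∈ Set.Ico 0 1) ∧ digitVec q N f ∈ S} =
      ⋃ v ∈ S.toFinite.toFinset, {f | (∀ i, f i ∈ Set.Ico 0 1) ∧ digitVec q N f = v} := by
  ext f
  simp

lemma measurableSet_setOf_digitVec_mem (N : ℕ) (S : Set (Fin s × Fin N → ZMod q)) :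
    MeasurableSet {f : Fin s → ℝ | (∀ i, f i ∈ Set.Ico 0 1) ∧ digitVec q N f ∈ S} := by
  rw [setOf_digitVec_mem_eq_biUnion]
  refine Finset.measurableSet_biUnion _ fun v _ => ?_
  rw [setOf_digitVec_eq]
  exact MeasurableSet.univ_pi fun i => measurableSet_digitCylinder _

lemma volume_setOf_digitVec_mem (N : ℕ) (S : Set (Fin s × Fin N → ZMod q)) :
    volume {f : Fin s → ℝ | (∀ i, f i ∈ Set.Ico 0 1) ∧ digitVec q N f ∈ S} =
      Nat.card S * ((q : ℝ≥0∞) ^ (s * N))⁻¹ := by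
  have hcyl (v : Fin s × Fin N → ZMod q) :
      volume {f : Fin s → ℝ | (∀ i, f i ∈ Set.Ico 0 1) ∧ digitVec q N f = v} =
        ((q : ℝ≥0∞) ^ (s * N))⁻¹ := by
    rw [setOf_digitVec_eq, volume_pi_pi]
    simp only [volume_digitCylinder, Finset.prod_const, Finset.card_univ, Fintype.card_fin]
    rw [← ENNReal.inv_pow, ← pow_mul, mul_comm]
  rw [setOf_digitVec_mem_eq_biUnion, measure_biUnion_finset]
  · rw [Finset.sum_congr rfl fun v _ => hcyl v, Finset.sum_const, nsmul_eq_mul,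
      Nat.card_eq_card_finite_toFinset]
  · intro v _ w _ hvw
    exact Set.disjoint_left.2 fun f hv hw => hvw (hv.2.symm.trans hw.2)
  · intro v _
    simpa using measurableSet_setOf_digitVec_mem N {v}

end DigitVectors

lemma volume_setOf_mulVec_digitVec_eq_zero {q s N : ℕ} [Fact q.Prime] {ι : Type*} [Fintype ι]
    {A : Matrix ι (Fin s × Fin N) (ZMod q)} (h : Function.Surjective A.mulVec) :
    volume {f : Fin s → ℝ | (∀ i, f i ∈ Set.Ico 0 1) ∧ A *ᵥ digitVec q N f = 0} =
      ((q : ℝ≥0∞) ^ Fintype.card ι)⁻¹ := by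
  have hcard := Matrix.natCard_setOf_mulVec_eq_zero_mul h
  simp only [Nat.card_zmod, Fintype.card_prod, Fintype.card_fin] at hcard
  have hpos : Nat.card {v : Fin s × Fin N → ZMod q | A *ᵥ v = 0} ≠ 0 :=
    Nat.card_ne_zero.2 ⟨⟨0, Matrix.mulVec_zero A⟩, inferInstance⟩
  refine (volume_setOf_digitVec_mem N {v | A *ᵥ v = 0}).trans ?_
  rw [← Nat.cast_pow, ← hcard]
  push_cast
  rw [ENNReal.mul_inv (by simp) (by simp), ← mul_assoc,
    ENNReal.mul_inv_cancel (by simpa using hpos) (by simp), one_mul]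

section FracCoeffMatrix

variable {q s : ℕ}

lemma fracCoeff_eq_sum_range {k : (ZMod q)[X]} {n N : ℕ} (h : n + k.natDegree < N)
    (d : ℕ → ZMod q) :
    fracCoeff q k d n = ∑ m ∈ range N, (X ^ n * k).coeff m * d m := by
  obtain ⟨N, rfl⟩ := Nat.exists_eq_add_of_le (by omega : n ≤ N)
  rw [Finset.sum_range_add, Finset.sum_eq_zero fun m hm => by
    rw [coeff_X_pow_mul', if_neg (by simpa using hm), zero_mul], zero_add, fracCoeff]
  simp only [coeff_X_pow_mul', le_add_iff_nonneg_right, zero_le, if_true, add_tsub_cancel_left]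
  refine Finset.sum_subset (Finset.range_subset_range.2 (by omega)) fun j _ hj => ?_
  rw [coeff_eq_zero_of_natDegree_lt (by simpa using hj), zero_mul]

/-- The entry at `(n, (i, m))` is `(k i).coeff (m - n)`, the weight of digit `m` of `f i` in the
fractional coefficient `n` of `∑ i, k i * f i`. -/
noncomputable def fracCoeffMatrix (k : Fin s → (ZMod q)[X]) (M N : ℕ) :
    Matrix (Fin M) (Fin s × Fin N) (ZMod q) :=
  Matrix.of fun n p => (X ^ (n : ℕ) * k p.1).coeff p.2

lemma fracCoeffMatrix_mulVec_digitVec {k : Fin s → (ZMod q)[X]} {M N : ℕ}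
    (hN : ∀ i, M + (k i).natDegree ≤ N) (f : Fin s → ℝ) (n : Fin M) :
    (fracCoeffMatrix k M N *ᵥ digitVec q N f) n = ∑ i, fracCoeff q (k i) (qDigit q (f i)) n := by
  simp only [Matrix.mulVec, dotProduct, Fintype.sum_prod_type, fracCoeffMatrix, Matrix.of_apply,
    digitVec]
  refine Finset.sum_congr rfl fun i _ => ?_
  rw [fracCoeff_eq_sum_range (N := N) (by have := hN i; omega)]
  exact Fin.sum_univ_eq_sum_range (fun m => (X ^ (n : ℕ) * k i).coeff m * qDigit q (f i) m) N

/-- The event `ν({∑ i, k i * f i}) ≤ -(M + 1)` of the paper, on the box `[0, 1) ^ s`. -/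
def fracEvent (q : ℕ) (k : Fin s → (ZMod q)[X]) (M : ℕ) : Set (Fin s → ℝ) :=
  {f | (∀ i, f i ∈ Set.Ico 0 1) ∧ ∀ n < M, ∑ i, fracCoeff q (k i) (qDigit q (f i)) n = 0}

lemma fracEvent_eq_setOf_mulVec {k : Fin s → (ZMod q)[X]} {M N : ℕ}
    (hN : ∀ i, M + (k i).natDegree ≤ N) :
    fracEvent q k M =
      {f | (∀ i, f i ∈ Set.Ico 0 1) ∧ fracCoeffMatrix k M N *ᵥ digitVec q N f = 0} := by
  ext f
  simp only [fracEvent, Set.mem_ofPred_eq, funext_iff, Pi.zero_apply,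
    fracCoeffMatrix_mulVec_digitVec hN, Fin.forall_iff]

lemma vecMul_fracCoeffMatrix (k : Fin s → (ZMod q)[X]) {M N : ℕ} (a : Fin M → ZMod q)
    (p : Fin s × Fin N) :
    (a ᵥ* fracCoeffMatrix k M N) p =
      (((degreeLTEquiv (ZMod q) M).symm a : (ZMod q)[X]) * k p.1).coeff p.2 := by
  change _ = (((∑ n : Fin M, monomial n (a n)) * k p.1)).coeff p.2
  simp only [Matrix.vecMul, dotProduct, fracCoeffMatrix, Matrix.of_apply, Finset.sum_mul,
    finsetSum_coeff, ← C_mul_X_pow_eq_monomial, mul_assoc, coeff_C_mul]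

lemma measurableSet_fracEvent [NeZero q] (k : Fin s → (ZMod q)[X]) (M : ℕ) :
    MeasurableSet (fracEvent q k M) := by
  obtain ⟨N, hN⟩ := (Filter.eventually_all.2 fun i =>
    Filter.eventually_ge_atTop (M + (k i).natDegree)).exists
  rw [fracEvent_eq_setOf_mulVec hN]
  exact measurableSet_setOf_digitVec_mem N {v | fracCoeffMatrix k M N *ᵥ v = 0}

end FracCoeffMatrix

section Independence

variable {q s : ℕ} [Fact q.Prime]

lemma vecMul_fromRows_fracCoeffMatrix_injective {k k' : Fin s → (ZMod q)[X]} {M₁ M₂ N : ℕ}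
    (h₁ : ∀ i, M₁ + (k i).natDegree ≤ N) (h₂ : ∀ i, M₂ + (k' i).natDegree ≤ N)
    (hrel : ∀ A B : (ZMod q)[X], A.degree < M₁ → B.degree < M₂ →
      (∀ i, A * k i + B * k' i = 0) → A = 0 ∧ B = 0) :
    Function.Injective
      (Matrix.fromRows (fracCoeffMatrix k M₁ N) (fracCoeffMatrix k' M₂ N)).vecMul := by
  rw [← Matrix.coe_vecMulLinear, injective_iff_map_eq_zero]
  intro a ha
  set A := (degreeLTEquiv (ZMod q) M₁).symm (a ∘ Sum.inl)
  set B := (degreeLTEquiv (ZMod q) M₂).symm (a ∘ Sum.inr)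
  have hAB : ∀ i, (A : (ZMod q)[X]) * k i + B * k' i = 0 := by
    intro i
    ext m
    rcases lt_or_ge m N with hm | hm
    · simpa [Matrix.vecMul_fromRows, vecMul_fracCoeffMatrix] using congrFun ha (i, ⟨m, hm⟩)
    · simp [coeff_mul_eq_zero_of_degree_lt (mem_degreeLT.1 A.2) (h₁ i) hm,
        coeff_mul_eq_zero_of_degree_lt (mem_degreeLT.1 B.2) (h₂ i) hm]
  obtain ⟨hA, hB⟩ := hrel A B (mem_degreeLT.1 A.2) (mem_degreeLT.1 B.2) hAB
  have hl : a ∘ Sum.inl = 0 := by simpa [A] using (Subtype.ext hA : A = 0)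
  have hr : a ∘ Sum.inr = 0 := by simpa [B] using (Subtype.ext hB : B = 0)
  ext (j | j)
  · exact congrFun hl j
  · exact congrFun hr j

lemma volume_fracEvent_inter {k k' : Fin s → (ZMod q)[X]} {M₁ M₂ : ℕ}
    (hrel : ∀ A B : (ZMod q)[X], A.degree < M₁ → B.degree < M₂ →
      (∀ i, A * k i + B * k' i = 0) → A = 0 ∧ B = 0) :
    volume (fracEvent q k M₁ ∩ fracEvent q k' M₂) =
      ((q : ℝ≥0∞) ^ M₁)⁻¹ * ((q : ℝ≥0∞) ^ M₂)⁻¹ := by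
  obtain ⟨N, hN⟩ := (Filter.eventually_all.2 fun i => Filter.eventually_ge_atTop
    (max (M₁ + (k i).natDegree) (M₂ + (k' i).natDegree))).exists
  have h₁ (i) : M₁ + (k i).natDegree ≤ N := le_of_max_le_left (hN i)
  have h₂ (i) : M₂ + (k' i).natDegree ≤ N := le_of_max_le_right (hN i)
  have hinter : fracEvent q k M₁ ∩ fracEvent q k' M₂ = {f | (∀ i, f i ∈ Set.Ico 0 1) ∧
      (fracCoeffMatrix k M₁ N).fromRows (fracCoeffMatrix k' M₂ N) *ᵥ digitVec q N f = 0} := by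
    rw [fracEvent_eq_setOf_mulVec h₁, fracEvent_eq_setOf_mulVec h₂]
    ext f
    simp only [Set.mem_inter_iff, Set.mem_ofPred_eq, Matrix.fromRows_mulVec, funext_iff,
      Sum.forall, Sum.elim_inl, Sum.elim_inr, Pi.zero_apply]
    tauto
  have hinj := vecMul_fromRows_fracCoeffMatrix_injective h₁ h₂ hrel
  have hsurj := Matrix.mulVec_surjective_of_vecMul_injective hinj
  rw [hinter, volume_setOf_mulVec_digitVec_eq_zero hsurj, Fintype.card_sum, Fintype.card_fin,
    Fintype.card_fin, pow_add, ENNReal.mul_inv (by simp) (by simp)]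

lemma fracEvent_subset_fracEvent_zero (k : Fin s → (ZMod q)[X]) (M : ℕ) :
    fracEvent q k M ⊆ fracEvent q k 0 :=
  fun _ hf => ⟨hf.1, fun n hn => absurd hn n.not_lt_zero⟩

lemma volume_fracEvent {k : Fin s → (ZMod q)[X]} (hk : ∃ i, k i ≠ 0) (M : ℕ) :
    volume (fracEvent q k M) = ((q : ℝ≥0∞) ^ M)⁻¹ := by
  obtain ⟨i, hi⟩ := hk
  have h := volume_fracEvent_inter (k := k) (k' := k) (M₁ := M) (M₂ := 0) fun A B _ hB hAB => by
    obtain rfl : B = 0 := degree_eq_bot.1 (Nat.WithBot.lt_zero_iff.1 (by exact_mod_cast hB))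
    simpa [hi] using hAB i
  rwa [Set.inter_eq_left.2 (fracEvent_subset_fracEvent_zero k M), pow_zero, inv_one,
    mul_one] at h

end Independence

section GcdOne

variable {q s : ℕ} [Fact q.Prime]

lemma GcdOne.exists_ne_zero {k : Fin s → (ZMod q)[X]} (h : GcdOne k) : ∃ i, k i ≠ 0 := by
  by_contra! h0
  exact not_isUnit_zero (h 0 fun i => by simp [h0 i])

lemma GcdOne.gcd_eq_one {k : Fin s → (ZMod q)[X]} (h : GcdOne k) : Finset.univ.gcd k = 1 := by
  rw [← Finset.normalize_gcd, normalize_eq_one]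
  exact h _ fun i => Finset.gcd_dvd (Finset.mem_univ i)

lemma GcdOne.eq_zero_of_mul_add_mul_eq_zero {k k' : Fin s → (ZMod q)[X]} (hk : GcdOne k)
    (hk' : GcdOne k') (hkk' : k ∉ MulAction.orbit (ZMod q)ˣ k') {A B : (ZMod q)[X]}
    (h : ∀ i, A * k i + B * k' i = 0) : A = 0 ∧ B = 0 := by
  have hnorm : normalize A = normalize (-B) := by
    have hfun : (fun i => A * k i) = fun i => -B * k' i :=
      funext fun i => by rw [neg_mul, ← eq_neg_of_add_eq_zero_left (h i)]
    have := congrArg (Finset.univ.gcd ·) hfun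
    rwa [Finset.gcd_mul_left, Finset.gcd_mul_left, hk.gcd_eq_one, hk'.gcd_eq_one, mul_one,
      mul_one] at this
  obtain ⟨u, hu⟩ := normalize_eq_normalize_iff_associated.1 hnorm
  rcases eq_or_ne A 0 with rfl | hA
  · exact ⟨rfl, by simpa using hu.symm⟩
  refine absurd ?_ hkk'
  obtain ⟨r, hr, hru⟩ := Polynomial.isUnit_iff.1 u.isUnit
  refine ⟨hr.unit, funext fun i => ?_⟩
  have hi : A * (k i - u * k' i) = 0 := by linear_combination h i - k' i * hu
  show (hr.unit • k') i = k i
  rw [Pi.smul_apply, Units.smul_def, IsUnit.unit_spec, smul_eq_C_mul, hru,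
    ← sub_eq_zero.1 ((mul_eq_zero.1 hi).resolve_left hA)]

lemma volume_fracEvent_inter_of_notMem_orbit {k k' : Fin s → (ZMod q)[X]} (hk : GcdOne k)
    (hk' : GcdOne k') (hkk' : k ∉ MulAction.orbit (ZMod q)ˣ k') (M₁ M₂ : ℕ) :
    volume (fracEvent q k M₁ ∩ fracEvent q k' M₂) =
      volume (fracEvent q k M₁) * volume (fracEvent q k' M₂) := by
  rw [volume_fracEvent_inter fun A B _ _ => hk.eq_zero_of_mul_add_mul_eq_zero hk' hkk',
    volume_fracEvent hk.exists_ne_zero, volume_fracEvent hk'.exists_ne_zero]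

lemma encard_setOf_volume_fracEvent_inter_ne_le {e : ℕ → Fin s → (ZMod q)[X]}
    (he : Function.Injective e) (he' : ∀ n, GcdOne (e n)) (M : ℕ → ℕ) (n : ℕ) :
    {m | volume (fracEvent q (e n) (M n) ∩ fracEvent q (e m) (M m)) ≠
      volume (fracEvent q (e n) (M n)) * volume (fracEvent q (e m) (M m))}.encard ≤
        Nat.card (ZMod q)ˣ := by
  refine (Set.encard_le_encard fun m hm => ?_).trans
    ((Set.encard_preimage_orbit_le he (e n)).trans_eq (ENat.card_eq_coe_natCard _))
  exact MulAction.mem_orbit_symm.1 (not_not.1 fun h =>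
    hm (volume_fracEvent_inter_of_notMem_orbit (he' n) (he' m) h _ _))

end GcdOne

lemma ae_infinite_setOf_mem_fracEvent {q s : ℕ} [Fact q.Prime] {P : Set (Fin s → (ZMod q)[X])}
    (hP : ∀ k ∈ P, GcdOne k) (M : (Fin s → (ZMod q)[X]) → ℕ)
    (hdiv : ∑' k : P, ((q : ℝ≥0∞) ^ M k)⁻¹ = ∞) :
    ∀ᵐ f ∂volume.restrict (Set.univ.pi fun _ : Fin s => Set.Ico (0 : ℝ) 1),
      {k | k ∈ P ∧ f ∈ fracEvent q k (M k)}.Infinite := by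
  set box := Set.univ.pi fun _ : Fin s => Set.Ico (0 : ℝ) 1
  have : IsProbabilityMeasure (volume.restrict box) :=
    ⟨by simp [box, volume_pi_pi]⟩
  have hPinf : P.Infinite := fun hfin => by
    have := hfin.fintype
    rw [tsum_fintype] at hdiv
    exact ENNReal.sum_ne_top.2 (fun k _ => by simp [NeZero.ne q]) hdiv
  have := hPinf.to_subtype
  obtain ⟨e⟩ : Nonempty (ℕ ≃ P) := nonempty_equiv_of_countable
  set A : ℕ → Set (Fin s → ℝ) := fun n => fracEvent q (e n) (M (e n))
  have hsub (n : ℕ) : A n ⊆ box := fun f hf => Set.mem_univ_pi.2 hf.1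
  have hμA (n : ℕ) : volume.restrict box (A n) = ((q : ℝ≥0∞) ^ M (e n))⁻¹ := by
    rw [Measure.restrict_eq_self _ (hsub n)]
    exact volume_fracEvent (hP _ (e n).2).exists_ne_zero _
  have hdep (n : ℕ) : {m | volume.restrict box (A n ∩ A m) ≠
      volume.restrict box (A n) * volume.restrict box (A m)}.encard ≤ Nat.card (ZMod q)ˣ := by
    simpa only [Measure.restrict_eq_self _ (hsub _),
      Measure.restrict_eq_self _ (Set.inter_subset_left.trans (hsub _))] using
      encard_setOf_volume_fracEvent_inter_ne_le (e := fun n => (e n : Fin s → (ZMod q)[X]))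
        (Subtype.val_injective.comp e.injective) (fun n => hP _ (e n).2) (fun n => M (e n)) n
  have hsum : ∑' n, volume.restrict box (A n) = ∞ := by
    simpa [hμA] using (e.tsum_eq fun k : P => ((q : ℝ≥0∞) ^ M k)⁻¹).trans hdiv
  filter_upwards [ae_infinite_setOf_mem_of_tsum_eq_top (fun n => measurableSet_fracEvent _ _)
    hdep hsum] with f hf
  exact (hf.image (Subtype.val_injective.comp e.injective).injOn).mono
    (by rintro _ ⟨n, hn, rfl⟩; exact ⟨(e n).2, hn⟩)

theorem almost_all_infinitely_many_general (q : ℕ) (hq : q.Prime) (s : ℕ)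
    (P : Set (Fin s → Polynomial (ZMod q)))
    (hP : ∀ k ∈ P, (∀ i, k i ≠ 0) ∧ GcdOne k ∧ ¬ ∀ i, k i = 1)
    (F : (Fin s → ℕ) → ℕ)
    (hdiv : ∑' k : P, ((q : ENNReal) ^ F (fun i => (k.val i).natDegree))⁻¹ = ⊤) :
    volume {f : Fin s → ℝ | (∀ i, f i ∈ Set.Ico (0:ℝ) 1) ∧
        ¬ {k : Fin s → Polynomial (ZMod q) | k ∈ P ∧
            ∀ n : ℕ, n + 2 ≤ F (fun i => (k i).natDegree) →
              ∑ i, fracCoeff q (k i) (qDigit q (f i)) n = 0}.Infinite} = 0 := by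
  have : Fact q.Prime := ⟨hq⟩
  -- `n + 2 ≤ F ↔ n < F - 1`, so the event is `fracEvent` with `M = F - 1`, of measure `≥ q^{-F}`.
  have hdiv' : ∑' k : P, ((q : ℝ≥0∞) ^ (F (fun i => (k.val i).natDegree) - 1))⁻¹ = ∞ :=
    top_unique (hdiv ▸ ENNReal.tsum_le_tsum fun k => ENNReal.inv_le_inv.2
      (pow_le_pow_right₀ (by exact_mod_cast hq.one_le) (Nat.sub_le _ _)))
  have hae := ae_infinite_setOf_mem_fracEvent (fun k hk => (hP k hk).2.1)
    (fun k => F (fun i => (k i).natDegree) - 1) hdiv'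
  rw [ae_restrict_iff' (MeasurableSet.univ_pi fun _ => measurableSet_Ico)] at hae
  refine measure_mono_null (fun f ⟨hbox, hfin⟩ => ?_) (ae_iff.1 hae)
  rw [Set.mem_ofPred_eq]
  intro hinf
  refine hfin ((hinf (Set.mem_univ_pi.2 hbox)).mono fun k hk => ⟨hk.1, fun n hn => hk.2.2 n ?_⟩)
  omega

/-- Lemma 4 of the paper: if `P` is a set of tuples `(k_1,…,k_s)` of nonzero
polynomials with gcd `1`, excluding `(1,…,1)`, and `F : ℕ₀^s → ℕ` satisfies
`∑_{(k_1,…,k_s) ∈ P} q^{-F(deg k_1,…,deg k_s)} = ∞`, then for almost all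
`(f_1,…,f_s) ∈ Z̄^s` there are infinitely many `(k_1,…,k_s) ∈ P` with
`ν({k_1 f_1 + ⋯ + k_s f_s}) ≤ -F(deg k_1,…,deg k_s)`. -/
theorem almost_all_infinitely_many (q : ℕ) (hq : q.Prime) (s : ℕ) (hs : 1 ≤ s)
    (P : Set (Fin s → Polynomial (ZMod q)))
    (hP : ∀ k ∈ P, (∀ i, k i ≠ 0) ∧ GcdOne k ∧ ¬ ∀ i, k i = 1)
    (F : (Fin s → ℕ) → ℕ)
    (hdiv : ∑' k : P, ((q : ENNReal) ^ F (fun i => (k.val i).natDegree))⁻¹ = ⊤) :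
    volume {f : Fin s → ℝ | (∀ i, f i ∈ Set.Ico (0:ℝ) 1) ∧
        ¬ {k : Fin s → Polynomial (ZMod q) | k ∈ P ∧
            ∀ n : ℕ, n + 2 ≤ F (fun i => (k i).natDegree) →
              ∑ i, fracCoeff q (k i) (qDigit q (f i)) n = 0}.Infinite} = 0 :=
  almost_all_infinitely_many_general q hq s P hP F hdiv
end

section
/- Let q be prime, s ≥ 2, and p ∈ F_q[x] a nonzero polynomial divisible by x. Then for every x₀ ∈ ℕ, the sum ∑_{ℓ monic, deg(ℓ) ≤ x₀, gcd(ℓ,p)=1} μ_q(ℓ)/q^{s·deg(ℓ)} ≥ 1 − (q−1)/q^s − 1/(q^{s−1}(q^{s−1}−1)) > 0, where μ_q is the polynomial Möbius function. -/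
open Polynomial UniqueFactorizationMonoid
open scoped Classical

noncomputable def polyMoebius (q : ℕ) [Fact q.Prime] (f : Polynomial (ZMod q)) : ℤ :=
  if Squarefree f then (-1) ^ (Multiset.card (normalizedFactors f)) else 0

/-!
Group the sum by degree. The constant polynomial `1` contributes `1`. There are at most `q - 1`
monic linear polynomials coprime to `p`, since `x ∣ p` excludes `x` itself, so degree one
contributes at least `-(q - 1)/q^s`. In degree `d ≥ 2` there are at most `q^d` monic polynomials,
so, as `|μ_q| ≤ 1`, degree `d` contributes at least `-Q⁻ᵈ` with `Q = q^(s-1) ≥ 2`; the geometric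
tail `∑_{d ≥ 2} Q⁻ᵈ` equals `1/(Q(Q-1))`.
-/

namespace Polynomial

section MonicCount

variable {R : Type*} [Semiring R] [Nontrivial R]

theorem ncard_setOf_monic_natDegree_eq (n : ℕ) :
    {p : R[X] | p.Monic ∧ p.natDegree = n}.ncard = Nat.card R ^ n := by
  rw [← Nat.card_coe_set_eq]
  exact (Nat.card_congr ((monicEquivDegreeLT n).trans (degreeLTEquiv R n).toEquiv)).trans
    (by rw [Nat.card_fun, Nat.card_fin])

variable [Finite R]

theorem finite_setOf_monic_natDegree_eq (n : ℕ) :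
    {p : R[X] | p.Monic ∧ p.natDegree = n}.Finite :=
  Set.finite_coe_iff.1 <| Finite.of_equiv _
    ((monicEquivDegreeLT n).trans (degreeLTEquiv R n).toEquiv).symm

theorem finite_setOf_monic_natDegree_le (n : ℕ) :
    {p : R[X] | p.Monic ∧ p.natDegree ≤ n}.Finite :=
  ((Set.finite_Iic n).biUnion fun d _ => finite_setOf_monic_natDegree_eq d).subset
    fun _ hp => Set.mem_biUnion (Set.mem_Iic.2 hp.2) ⟨hp.1, rfl⟩

theorem card_filter_natDegree_eq_le (S : Finset R[X]) (hS : ∀ p ∈ S, p.Monic) (d : ℕ) :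
    (S.filter (·.natDegree = d)).card ≤ Nat.card R ^ d := by
  rw [← ncard_setOf_monic_natDegree_eq, ← Set.ncard_coe_finset]
  refine Set.ncard_le_ncard (fun p hp => ?_) (finite_setOf_monic_natDegree_eq d)
  rw [Finset.coe_filter] at hp
  exact ⟨hS p hp.1, hp.2⟩

end MonicCount

theorem ncard_setOf_monic_natDegree_eq_one_isCoprime_X_le {R : Type*} [CommRing R]
    [Nontrivial R] [Finite R] :
    {p : R[X] | p.Monic ∧ p.natDegree = 1 ∧ IsCoprime p X}.ncard ≤ Nat.card R - 1 := by
  have hsub : {p : R[X] | p.Monic ∧ p.natDegree = 1 ∧ IsCoprime p X} ⊆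
      (fun a => X + C a) '' {0}ᶜ := by
    rintro p ⟨hmonic, hdeg, hcop⟩
    refine ⟨p.coeff 0, fun h0 => not_isUnit_X (R := R) ?_, (hmonic.eq_X_add_C hdeg).symm⟩
    exact hcop.isUnit_of_dvd' (X_dvd_iff.2 h0) dvd_rfl
  calc _ ≤ ((fun a => X + C a) '' ({0}ᶜ : Set R)).ncard := Set.ncard_le_ncard hsub
    _ ≤ ({0}ᶜ : Set R).ncard := Set.ncard_image_le
    _ = Nat.card R - 1 := by rw [Set.ncard_compl, Set.ncard_singleton]

theorem card_filter_natDegree_eq_one_le {R : Type*} [CommRing R] [Nontrivial R] [Finite R]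
    (S : Finset R[X]) (hS : ∀ p ∈ S, p.Monic ∧ IsCoprime p X) :
    (S.filter (·.natDegree = 1)).card ≤ Nat.card R - 1 := by
  refine le_trans ?_ ncard_setOf_monic_natDegree_eq_one_isCoprime_X_le
  rw [← Set.ncard_coe_finset]
  refine Set.ncard_le_ncard (fun p hp => ?_)
    ((finite_setOf_monic_natDegree_eq 1).subset fun _ h => ⟨h.1, h.2.1⟩)
  rw [Finset.coe_filter] at hp
  exact ⟨(hS p hp.1).1, hp.2, (hS p hp.1).2⟩

theorem sum_filter_natDegree_eq_zero {R M : Type*} [Semiring R] [AddCommMonoid M]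
    (S : Finset R[X]) (hS : ∀ p ∈ S, p.Monic) (h1 : 1 ∈ S) (f : R[X] → M) :
    ∑ p ∈ S.filter (·.natDegree = 0), f p = f 1 := by
  refine Finset.sum_eq_single_of_mem 1 (Finset.mem_filter.2 ⟨h1, natDegree_one⟩) fun p hp hp1 => ?_
  rw [Finset.mem_filter] at hp
  exact absurd ((hS p hp.1).natDegree_eq_zero.1 hp.2) hp1

end Polynomial

theorem polyMoebius_one (q : ℕ) [Fact q.Prime] : polyMoebius q 1 = 1 := by
  simp [polyMoebius]

theorem neg_one_le_polyMoebius (q : ℕ) [Fact q.Prime] (f : (ZMod q)[X]) :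
    -1 ≤ polyMoebius q f := by
  unfold polyMoebius
  split_ifs
  · rcases neg_one_pow_eq_or ℤ (Multiset.card (normalizedFactors f)) with h | h <;> norm_num [h]
  · norm_num

theorem neg_div_le_sum_polyMoebius_div (q : ℕ) [Fact q.Prime] (s d c : ℕ)
    (G : Finset (ZMod q)[X]) (hG : ∀ ℓ ∈ G, ℓ.natDegree = d) (hc : G.card ≤ c) :
    -((c : ℝ) / (q : ℝ) ^ (s * d)) ≤
      ∑ ℓ ∈ G, (polyMoebius q ℓ : ℝ) / (q : ℝ) ^ (s * ℓ.natDegree) := by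
  have hterm : ∀ ℓ ∈ G, -(1 / (q : ℝ) ^ (s * d)) ≤
      (polyMoebius q ℓ : ℝ) / (q : ℝ) ^ (s * ℓ.natDegree) := fun ℓ hℓ => by
    rw [hG ℓ hℓ, ← neg_div]
    gcongr
    exact_mod_cast neg_one_le_polyMoebius q ℓ
  calc -((c : ℝ) / (q : ℝ) ^ (s * d)) ≤ G.card • -(1 / (q : ℝ) ^ (s * d)) := by
        rw [nsmul_eq_mul, mul_neg, mul_one_div, neg_le_neg_iff]
        gcongr
    _ ≤ _ := Finset.card_nsmul_le_sum G _ _ hterm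

theorem le_sum_range_of_le {T : ℕ → ℝ} {a r : ℝ} (ha : 0 ≤ a) (hr₀ : 0 ≤ r) (hr₁ : r < 1)
    (h₀ : T 0 = 1) (h₁ : -a ≤ T 1) (h : ∀ d ≥ 2, -r ^ d ≤ T d) (n : ℕ) :
    1 - a - r ^ 2 / (1 - r) ≤ ∑ d ∈ Finset.range (n + 1), T d := by
  have htail : 0 ≤ r ^ 2 / (1 - r) := div_nonneg (by positivity) (by linarith)
  rcases n with _ | n
  · rw [Finset.sum_range_one, h₀]
    linarith
  have hgeom : -(r ^ 2 / (1 - r)) ≤ ∑ d ∈ Finset.Ico 2 (n + 2), T d :=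
    calc -(r ^ 2 / (1 - r)) ≤ ∑ d ∈ Finset.Ico 2 (n + 2), -r ^ d := by
          rw [Finset.sum_neg_distrib]
          exact neg_le_neg (geom_sum_Ico_le_of_lt_one hr₀ hr₁)
      _ ≤ _ := Finset.sum_le_sum fun d hd => h d (Finset.mem_Ico.1 hd).1
  rw [Finset.range_eq_Ico, Finset.sum_eq_sum_Ico_succ_bot (by omega),
    Finset.sum_eq_sum_Ico_succ_bot (by omega), h₀]
  linarith

theorem inv_sq_div_one_sub_inv {Q : ℝ} (hQ : 1 < Q) :
    Q⁻¹ ^ 2 / (1 - Q⁻¹) = 1 / (Q * (Q - 1)) := by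
  have : Q - 1 ≠ 0 := by linarith
  field_simp

theorem pow_div_pow_mul_eq_inv_pow {q : ℝ} (hq : q ≠ 0) {s : ℕ} (hs : 1 ≤ s) (d : ℕ) :
    q ^ d / q ^ (s * d) = (q ^ (s - 1))⁻¹ ^ d := by
  obtain ⟨t, rfl⟩ : ∃ t, s = t + 1 := ⟨s - 1, by omega⟩
  rw [add_one_mul, pow_add, div_mul_cancel_right₀ (pow_ne_zero _ hq), Nat.add_sub_cancel,
    inv_pow, ← pow_mul, mul_comm]

theorem one_sub_sub_pos {q : ℝ} (hq : 2 ≤ q) {s : ℕ} (hs : 2 ≤ s) :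
    0 < 1 - (q - 1) / q ^ s - 1 / (q ^ (s - 1) * (q ^ (s - 1) - 1)) := by
  have hQ : 2 ≤ q ^ (s - 1) := hq.trans (le_self_pow₀ (by linarith) (by omega))
  have hqs : q ^ 2 ≤ q ^ s := pow_le_pow_right₀ (by linarith) hs
  have h₁ : (q - 1) / q ^ s < 1 / 2 := by
    rw [div_lt_div_iff₀ (by positivity) two_pos]
    nlinarith
  have h₂ : 1 / (q ^ (s - 1) * (q ^ (s - 1) - 1)) ≤ 1 / 2 :=
    one_div_le_one_div_of_le two_pos (by nlinarith)
  linarith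

theorem moebius_truncated_sum_positive_general (q : ℕ) [Fact q.Prime] (s : ℕ) (hs : 2 ≤ s)
    (p : Polynomial (ZMod q)) (hX : Polynomial.X ∣ p) (x₀ : ℕ) :
    ((1 : ℝ) - ((q : ℝ) - 1) / (q : ℝ) ^ s
        - 1 / ((q : ℝ) ^ (s - 1) * ((q : ℝ) ^ (s - 1) - 1)) ≤
      ∑ᶠ ℓ ∈ {ℓ : Polynomial (ZMod q) | ℓ.Monic ∧ ℓ.natDegree ≤ x₀ ∧ IsCoprime ℓ p},
        (polyMoebius q ℓ : ℝ) / (q : ℝ) ^ (s * ℓ.natDegree)) ∧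
    (0 : ℝ) < (1 : ℝ) - ((q : ℝ) - 1) / (q : ℝ) ^ s
        - 1 / ((q : ℝ) ^ (s - 1) * ((q : ℝ) ^ (s - 1) - 1)) := by
  have hq : (2 : ℝ) ≤ q := by exact_mod_cast (Fact.out : q.Prime).two_le
  have hQ : (1 : ℝ) < (q : ℝ) ^ (s - 1) := one_lt_pow₀ (by linarith) (by omega)
  refine ⟨?_, one_sub_sub_pos hq hs⟩
  have hA : {ℓ : (ZMod q)[X] | ℓ.Monic ∧ ℓ.natDegree ≤ x₀ ∧ IsCoprime ℓ p}.Finite :=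
    (finite_setOf_monic_natDegree_le x₀).subset fun _ h => ⟨h.1, h.2.1⟩
  have hS : ∀ ℓ ∈ hA.toFinset, ℓ.Monic ∧ ℓ.natDegree ≤ x₀ ∧ IsCoprime ℓ p :=
    fun _ => hA.mem_toFinset.1
  rw [finsum_mem_eq_finite_toFinset_sum _ hA, ← Finset.sum_fiberwise_of_maps_to
    (t := Finset.range (x₀ + 1)) fun ℓ hℓ => Finset.mem_range_succ_iff.2 (hS ℓ hℓ).2.1,
    ← inv_sq_div_one_sub_inv hQ]
  have hfiber : ∀ d c, (hA.toFinset.filter (·.natDegree = d)).card ≤ c →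
      -((c : ℝ) / (q : ℝ) ^ (s * d)) ≤ ∑ ℓ ∈ hA.toFinset.filter (·.natDegree = d),
        (polyMoebius q ℓ : ℝ) / (q : ℝ) ^ (s * ℓ.natDegree) :=
    fun d c => neg_div_le_sum_polyMoebius_div q s d c _ fun _ hℓ => (Finset.mem_filter.1 hℓ).2
  refine le_sum_range_of_le (div_nonneg (by linarith) (by positivity)) (by positivity)
    (inv_lt_one_of_one_lt₀ hQ) ?_ ?_ ?_ x₀
  · rw [sum_filter_natDegree_eq_zero _ (fun ℓ hℓ => (hS ℓ hℓ).1)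
      (hA.mem_toFinset.2 ⟨monic_one, natDegree_one.le.trans x₀.zero_le, isCoprime_one_left⟩)]
    simp [polyMoebius_one]
  · have := hfiber 1 _ (card_filter_natDegree_eq_one_le _ fun ℓ hℓ =>
      ⟨(hS ℓ hℓ).1, (hS ℓ hℓ).2.2.of_isCoprime_of_dvd_right hX⟩)
    rwa [Nat.card_zmod, Nat.cast_sub (Fact.out : q.Prime).one_le, Nat.cast_one, mul_one] at this
  · intro d _
    have := hfiber d _ (card_filter_natDegree_eq_le _ (fun ℓ hℓ => (hS ℓ hℓ).1) d)
    rwa [Nat.card_zmod, Nat.cast_pow, pow_div_pow_mul_eq_inv_pow (by positivity) (by omega)]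
      at this

/-- For `s ≥ 2` and a nonzero `p ∈ F_q[x]` divisible by `x`, and any `x₀ ∈ ℕ`,
`∑_{ℓ monic, deg ℓ ≤ x₀, gcd(ℓ,p)=1} μ_q(ℓ)/q^{s·deg ℓ}
  ≥ 1 - (q-1)/q^s - 1/(q^{s-1}(q^{s-1}-1)) > 0`. -/
theorem moebius_truncated_sum_positive (q : ℕ) [Fact q.Prime] (s : ℕ) (hs : 2 ≤ s)
    (p : Polynomial (ZMod q)) (hp : p ≠ 0) (hX : Polynomial.X ∣ p) (x₀ : ℕ) :
    ((1 : ℝ) - ((q : ℝ) - 1) / (q : ℝ) ^ s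
        - 1 / ((q : ℝ) ^ (s - 1) * ((q : ℝ) ^ (s - 1) - 1)) ≤
      ∑ᶠ ℓ ∈ {ℓ : Polynomial (ZMod q) | ℓ.Monic ∧ ℓ.natDegree ≤ x₀ ∧ IsCoprime ℓ p},
        (polyMoebius q ℓ : ℝ) / (q : ℝ) ^ (s * ℓ.natDegree)) ∧
    (0 : ℝ) < (1 : ℝ) - ((q : ℝ) - 1) / (q : ℝ) ^ s
        - 1 / ((q : ℝ) ^ (s - 1) * ((q : ℝ) ^ (s - 1) - 1)) :=
  moebius_truncated_sum_positive_general q s hs p hX x₀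
end

section
/- Let q be a prime and identify each f ∈ F_q((x^{-1})) with f = ∑_{k≥1} f_k x^{-k} (zero polynomial part) with the Hankel matrix C = (f_{i+j−1})_{i,j≥1} over F_q. Then for every n ∈ ℕ₀ with base-q digit vector n⃗ = (n_0, n_1, ...)ᵀ, the digit vector of the fractional part {n(x)·f(x)} (i.e., the coefficient sequence of x^{-1}, x^{-2}, ...) equals C·n⃗ computed over F_q. -/
/-! Multiplication by `x^i = t^{-i}` shifts coefficients by `i`, so the coefficient of
`x^{-(m+1)}` in `n(x) f(x)` is `∑ᵢ nᵢ f_{m+1+i}`, which is row `m+1` of the Hankel matrix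
applied to the digit vector of `n`. -/

open Finset

noncomputable def seqToLaurent (q : ℕ) (f : ℕ → ZMod q) : LaurentSeries (ZMod q) :=
  HahnSeries.ofPowerSeries ℤ (ZMod q)
    (PowerSeries.mk fun k => if k = 0 then 0 else f (k - 1))

noncomputable def natPolyLaurent (q n : ℕ) : LaurentSeries (ZMod q) :=
  ∑ i ∈ Finset.range (n + 1), HahnSeries.single (-(i : ℤ)) ((n / q ^ i % q : ℕ) : ZMod q)

theorem seqToLaurent_coeff_natCast_add_one (q : ℕ) (f : ℕ → ZMod q) (k : ℕ) :
    (seqToLaurent q f).coeff ((k : ℤ) + 1) = f k := by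
  rw [seqToLaurent, ← Nat.cast_succ, HahnSeries.ofPowerSeries_apply_coeff, PowerSeries.coeff_mk,
    if_neg k.succ_ne_zero, Nat.succ_sub_one]

theorem LaurentSeries.coeff_sum_single_neg_mul {R : Type*} [Semiring R] (s : Finset ℕ)
    (d : ℕ → R) (g : LaurentSeries R) (a : ℤ) :
    ((∑ i ∈ s, HahnSeries.single (-(i : ℤ)) (d i)) * g).coeff a =
      ∑ i ∈ s, d i * g.coeff (a + i) := by
  simp only [sum_mul, HahnSeries.coeff_sum, HahnSeries.coeff_single_mul, sub_neg_eq_add]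

theorem kronecker_is_digital_general (q : ℕ) (f : ℕ → ZMod q) (n m : ℕ) :
    (natPolyLaurent q n * seqToLaurent q f).coeff ((m : ℤ) + 1) =
      ∑ i ∈ Finset.range (n + 1), f (m + i) * ((n / q ^ i % q : ℕ) : ZMod q) := by
  rw [natPolyLaurent, LaurentSeries.coeff_sum_single_neg_mul]
  refine sum_congr rfl fun i _ => ?_
  have shift : (m : ℤ) + 1 + i = ((m + i : ℕ) : ℤ) + 1 := by push_cast; ring
  rw [shift, seqToLaurent_coeff_natCast_add_one, mul_comm]

/-- The digit vector of the fractional part `{n(x)·f(x)}` equals the Hankel-matrix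
product `C·n⃗` over `F_q`: for every `m`, the coefficient of `x^{-(m+1)}` of
`n(x)·f(x)` is `∑_i f_{(m+1)+i-1+1} · n_i = ∑_i C_{m+1,i+1} n_i`, where
`C = (f_{i+j-1})_{i,j ≥ 1}` is the Hankel matrix of `f` and `n_i` are the base-`q`
digits of `n`. -/
theorem kronecker_is_digital (q : ℕ) (hq : q.Prime) (f : ℕ → ZMod q) (n m : ℕ) :
    (natPolyLaurent q n * seqToLaurent q f).coeff ((m : ℤ) + 1) =
      ∑ i ∈ Finset.range (n + 1), f (m + i) * ((n / q ^ i % q : ℕ) : ZMod q) :=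
  kronecker_is_digital_general q f n m
end
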